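/- arXiv:2404.10950 — 4 statements merged into one kernel-verified Lean document; each statement's English description precedes it below -/
import Mathlib

section
/- Let α ∈ (0,1)∪(1,∞), let p_X be a strictly positive probability distribution on 𝒳 and p_{Y|X} a channel with p_{Y|X}(y|x) > 0 for all x, y. Then the Sibson mutual information of order α satisfies I_α^S = sup over strictly positive reverse channels r_{X|Y} of F_α^{S1}(p_X, r_{X|Y}) := (α/(α−1)) · log Σ_{x,y} p_X(x)^{1/α} p_{Y|X}(y|x) r_{X|Y}(x|y)^{1−1/α}, and the supremum is attained. -/
/-!
Put `c_y = ∑ₓ p_X(x) p_{Y|X}(y|x)^α` and `T = ∑_y c_y^{1/α}`; let `s_y = c_y^{1/α} / T`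
be Sibson's optimal output distribution and `r*(x|y) = p_X(x) p_{Y|X}(y|x)^α / c_y`.
Both sides equal `α/(α-1) · log T`, by two exact decompositions into Rényi divergences:
`D_α(p_X p_{Y|X} ‖ p_X q_Y) = α/(α-1) · log T + D_α(s ‖ q_Y)` and
`F_α^{S1}(p_X, r) = α/(α-1) · log T - D_{1/α}(s r* ‖ s r)`.
The Rényi divergence between distributions is nonnegative (weighted AM-GM for orders at most `1`,
Bernoulli's inequality for orders at least `1`) and vanishes on the diagonal, so `q_Y = s` attains
the infimum and `r = r*` the supremum.
-/

/-- A probability mass function on a finite type. -/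
def IsPMF {Z : Type*} [Fintype Z] (q : Z → ℝ) : Prop :=
  (∀ z, 0 ≤ q z) ∧ ∑ z, q z = 1

/-- Rényi divergence of order `α`, valued in `EReal` (equal to `⊤` when `α > 1` and
`q` vanishes somewhere on the support of `p`). -/
noncomputable def renyiDE {Z : Type*} [Fintype Z] (α : ℝ) (p q : Z → ℝ) : EReal :=
  if 1 < α ∧ ∃ z, p z ≠ 0 ∧ q z = 0 then ⊤
  else (((1 / (α - 1)) * Real.log (∑ z, p z ^ α * q z ^ (1 - α)) : ℝ) : EReal)

/-- Sibson mutual information of order `α`: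
the minimum over output distributions `q_Y` of `D_α(p_X p_{Y|X} ‖ p_X q_Y)`. -/
noncomputable def sibsonMI {X Y : Type*} [Fintype X] [Fintype Y]
    (α : ℝ) (pX : X → ℝ) (pYX : X → Y → ℝ) : EReal :=
  sInf {v : EReal | ∃ qY : Y → ℝ, IsPMF qY ∧
    v = renyiDE α (fun z : X × Y => pX z.1 * pYX z.1 z.2)
          (fun z : X × Y => pX z.1 * qY z.2)}

open Finset

theorem mul_add_mul_le_rpow_mul_rpow {θ a b : ℝ} (hθ : 1 ≤ θ) (ha : 0 ≤ a) (hb : 0 ≤ b)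
    (hab : a ≠ 0 → b ≠ 0) : θ * a + (1 - θ) * b ≤ a ^ θ * b ^ (1 - θ) := by
  rcases ha.eq_or_lt with rfl | ha
  · rw [Real.zero_rpow (by linarith), zero_mul]
    nlinarith
  have hb : 0 < b := hb.lt_of_ne' (hab ha.ne')
  have h := one_add_mul_self_le_rpow_one_add (s := a / b - 1) (by
    have := div_nonneg ha.le hb.le; linarith) hθ
  rw [add_sub_cancel, Real.div_rpow ha.le hb.le] at h
  calc θ * a + (1 - θ) * b = b * (1 + θ * (a / b - 1)) := by field_simp; ring
    _ ≤ b * (a ^ θ / b ^ θ) := by gcongr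
    _ = a ^ θ * b ^ (1 - θ) := by rw [Real.rpow_sub hb, Real.rpow_one]; ring

section Renyi

variable {ι : Type*} [Fintype ι] {θ : ℝ} {a b : ι → ℝ}

theorem sum_rpow_mul_rpow_le_one (hθ₀ : 0 ≤ θ) (hθ₁ : θ ≤ 1) (ha : IsPMF a)
    (hb : IsPMF b) : ∑ i, a i ^ θ * b i ^ (1 - θ) ≤ 1 :=
  calc ∑ i, a i ^ θ * b i ^ (1 - θ) ≤ ∑ i, (θ * a i + (1 - θ) * b i) :=
        sum_le_sum fun i _ => Real.geom_mean_le_arith_mean2_weighted hθ₀ (sub_nonneg.2 hθ₁)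
          (ha.1 i) (hb.1 i) (add_sub_cancel θ 1)
    _ = 1 := by rw [sum_add_distrib, ← mul_sum, ← mul_sum, ha.2, hb.2]; ring

theorem one_le_sum_rpow_mul_rpow (hθ : 1 ≤ θ) (ha : IsPMF a) (hb : IsPMF b)
    (hab : ∀ i, a i ≠ 0 → b i ≠ 0) : 1 ≤ ∑ i, a i ^ θ * b i ^ (1 - θ) :=
  calc (1 : ℝ) = ∑ i, (θ * a i + (1 - θ) * b i) := by
        rw [sum_add_distrib, ← mul_sum, ← mul_sum, ha.2, hb.2]; ring
    _ ≤ ∑ i, a i ^ θ * b i ^ (1 - θ) :=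
        sum_le_sum fun i _ => mul_add_mul_le_rpow_mul_rpow hθ (ha.1 i) (hb.1 i) (hab i)

theorem renyiDE_nonneg (hθ : 0 ≤ θ) (ha : IsPMF a) (hb : IsPMF b) : 0 ≤ renyiDE θ a b := by
  unfold renyiDE
  split_ifs with h
  · exact le_top
  rw [not_and, not_exists] at h
  refine EReal.coe_nonneg.2 ?_
  rcases le_or_gt θ 1 with hθ₁ | hθ₁
  · exact mul_nonneg_of_nonpos_of_nonpos (by simpa using hθ₁)
      (Real.log_nonpos (sum_nonneg fun i _ => by have := ha.1 i; have := hb.1 i; positivity)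
        (sum_rpow_mul_rpow_le_one hθ hθ₁ ha hb))
  · exact mul_nonneg (by simpa using hθ₁.le) (Real.log_nonneg
      (one_le_sum_rpow_mul_rpow hθ₁.le ha hb fun i hai hbi => h hθ₁ i ⟨hai, hbi⟩))

theorem renyiDE_self (ha : IsPMF a) : renyiDE θ a a = 0 := by
  have hsum : ∑ i, a i ^ θ * a i ^ (1 - θ) = 1 := by
    simp_rw [← Real.rpow_add' (ha.1 _) (by simp : θ + (1 - θ) ≠ 0), add_sub_cancel,
      Real.rpow_one, ha.2]
  simp [renyiDE, hsum]

end Renyi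

theorem IsPMF.exists_pos {Z : Type*} [Fintype Z] {q : Z → ℝ} (hq : IsPMF q) :
    ∃ z, 0 < q z := by
  obtain ⟨z, -, hz⟩ := exists_lt_of_sum_lt (s := univ) (f := 0) (g := q) (by simp [hq.2])
  exact ⟨z, hz⟩

def reverseJoint {X Y : Type*} (s : Y → ℝ) (r : Y → X → ℝ) (z : X × Y) : ℝ :=
  s z.2 * r z.2 z.1

theorem isPMF_reverseJoint {X Y : Type*} [Fintype X] [Fintype Y] {s : Y → ℝ}
    {r : Y → X → ℝ} (hs : IsPMF s) (hr : ∀ y, IsPMF (r y)) : IsPMF (reverseJoint s r) := by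
  refine ⟨fun z => mul_nonneg (hs.1 _) ((hr _).1 _), ?_⟩
  simp_rw [reverseJoint, Fintype.sum_prod_type_right, ← mul_sum, (hr _).2, mul_one, hs.2]

theorem mul_rpow_mul_mul_rpow {u v w : ℝ} (θ : ℝ) (hu : 0 ≤ u) (hv : 0 ≤ v)
    (hw : 0 ≤ w) : (u * v) ^ θ * (u * w) ^ (1 - θ) = u * (v ^ θ * w ^ (1 - θ)) := by
  rw [Real.mul_rpow hu hv, Real.mul_rpow hu hw]
  have hu1 : u ^ θ * u ^ (1 - θ) = u := by
    rw [← Real.rpow_add' hu (by simp), add_sub_cancel, Real.rpow_one]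
  linear_combination v ^ θ * w ^ (1 - θ) * hu1

noncomputable section Sibson

variable {X Y : Type*} [Fintype X] (α : ℝ) (pX : X → ℝ) (pYX : X → Y → ℝ)

def tiltedMass (y : Y) : ℝ := ∑ x, pX x * pYX x y ^ α

def sibsonReverse (y : Y) (x : X) : ℝ := pX x * pYX x y ^ α / tiltedMass α pX pYX y

section PositiveChannel

variable {α pX pYX} [Nonempty X] (hpX : ∀ x, 0 < pX x) (hpYX : ∀ x y, 0 < pYX x y)
include hpX hpYX

theorem tiltedMass_pos (y : Y) : 0 < tiltedMass α pX pYX y :=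
  sum_pos (fun x _ => mul_pos (hpX x) (Real.rpow_pos_of_pos (hpYX x y) α)) univ_nonempty

theorem sibsonReverse_pos (y : Y) (x : X) : 0 < sibsonReverse α pX pYX y x :=
  div_pos (mul_pos (hpX x) (Real.rpow_pos_of_pos (hpYX x y) α)) (tiltedMass_pos hpX hpYX y)

theorem isPMF_sibsonReverse (y : Y) : IsPMF (sibsonReverse α pX pYX y) :=
  ⟨fun x => (sibsonReverse_pos hpX hpYX y x).le, by
    simp_rw [sibsonReverse, ← sum_div]; exact div_self (tiltedMass_pos hpX hpYX y).ne'⟩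

end PositiveChannel

variable [Fintype Y]

def sibsonNorm : ℝ := ∑ y, tiltedMass α pX pYX y ^ (1 / α)

def sibsonValue : ℝ := α / (α - 1) * Real.log (sibsonNorm α pX pYX)

def sibsonOutput (y : Y) : ℝ := tiltedMass α pX pYX y ^ (1 / α) / sibsonNorm α pX pYX

def sibsonF1 (r : Y → X → ℝ) : ℝ :=
  α / (α - 1) * Real.log (∑ x, ∑ y, pX x ^ (1 / α) * pYX x y * r y x ^ (1 - 1 / α))

variable {α pX pYX} [Nonempty X] (hpX : ∀ x, 0 < pX x) (hpYX : ∀ x y, 0 < pYX x y)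
include hpX hpYX

theorem sibsonOutput_mul_sibsonReverse_rpow (hα : α ≠ 0) (y : Y) (x : X) :
    sibsonOutput α pX pYX y * sibsonReverse α pX pYX y x ^ (1 / α)
      = pX x ^ (1 / α) * pYX x y / sibsonNorm α pX pYX := by
  have hc := tiltedMass_pos (α := α) hpX hpYX y
  rw [sibsonOutput, sibsonReverse,
    Real.div_rpow (mul_nonneg (hpX x).le (Real.rpow_nonneg (hpYX x y).le _)) hc.le,
    Real.mul_rpow (hpX x).le (Real.rpow_nonneg (hpYX x y).le _), one_div,
    Real.rpow_rpow_inv (hpYX x y).le hα]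
  field_simp

variable [Nonempty Y]

theorem sibsonNorm_pos : 0 < sibsonNorm α pX pYX :=
  sum_pos (fun y _ => Real.rpow_pos_of_pos (tiltedMass_pos hpX hpYX y) _) univ_nonempty

theorem sibsonOutput_pos (y : Y) : 0 < sibsonOutput α pX pYX y :=
  div_pos (Real.rpow_pos_of_pos (tiltedMass_pos hpX hpYX y) _) (sibsonNorm_pos hpX hpYX)

theorem isPMF_sibsonOutput : IsPMF (sibsonOutput α pX pYX) :=
  ⟨fun y => (sibsonOutput_pos hpX hpYX y).le, by
    simp_rw [sibsonOutput, ← sum_div]; exact div_self (sibsonNorm_pos hpX hpYX).ne'⟩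

theorem tiltedMass_eq_sibsonNorm_rpow_mul (hα : α ≠ 0) (y : Y) :
    tiltedMass α pX pYX y = sibsonNorm α pX pYX ^ α * sibsonOutput α pX pYX y ^ α := by
  have hc := tiltedMass_pos (α := α) hpX hpYX y
  have hT := sibsonNorm_pos hpX hpYX (α := α)
  rw [sibsonOutput, Real.div_rpow (Real.rpow_nonneg hc.le _) hT.le, one_div,
    Real.rpow_inv_rpow hc.le hα, mul_div_cancel₀ _ (Real.rpow_pos_of_pos hT α).ne']

theorem renyiDE_joint_eq_sibsonValue_add (hα : 0 < α) {q : Y → ℝ} (hq : IsPMF q) :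
    renyiDE α (fun z : X × Y => pX z.1 * pYX z.1 z.2) (fun z : X × Y => pX z.1 * q z.2)
      = sibsonValue α pX pYX + renyiDE α (sibsonOutput α pX pYX) q := by
  have hsupp : (∃ z : X × Y, pX z.1 * pYX z.1 z.2 ≠ 0 ∧ pX z.1 * q z.2 = 0)
      ↔ ∃ y, sibsonOutput α pX pYX y ≠ 0 ∧ q y = 0 := by
    simp [(hpX _).ne', (hpYX _ _).ne', (sibsonOutput_pos hpX hpYX _).ne']
  have hsum : ∑ z : X × Y, (pX z.1 * pYX z.1 z.2) ^ α * (pX z.1 * q z.2) ^ (1 - α)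
      = sibsonNorm α pX pYX ^ α * ∑ y, sibsonOutput α pX pYX y ^ α * q y ^ (1 - α) :=
    calc _ = ∑ y, tiltedMass α pX pYX y * q y ^ (1 - α) := by
          simp_rw [mul_rpow_mul_mul_rpow α (hpX _).le (hpYX _ _).le (hq.1 _),
            Fintype.sum_prod_type_right, tiltedMass, sum_mul, mul_assoc]
      _ = _ := by
          simp_rw [tiltedMass_eq_sibsonNorm_rpow_mul hpX hpYX hα.ne', mul_sum, mul_assoc]
  obtain ⟨y₀, hy₀⟩ := hq.exists_pos
  have hpos : 0 < ∑ y, sibsonOutput α pX pYX y ^ α * q y ^ (1 - α) :=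
    sum_pos' (fun y _ => mul_nonneg (Real.rpow_nonneg (sibsonOutput_pos hpX hpYX y).le _)
        (Real.rpow_nonneg (hq.1 y) _))
      ⟨y₀, mem_univ _, mul_pos (Real.rpow_pos_of_pos (sibsonOutput_pos hpX hpYX y₀) _)
        (Real.rpow_pos_of_pos hy₀ _)⟩
  have hT := sibsonNorm_pos hpX hpYX (α := α)
  simp only [renyiDE, hsupp]
  split_ifs
  · exact (EReal.coe_add_top _).symm
  · rw [hsum, Real.log_mul (Real.rpow_pos_of_pos hT α).ne' hpos.ne', Real.log_rpow hT,
      sibsonValue, ← EReal.coe_add]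
    congr 1
    ring

theorem sibsonF1_add_renyiDE_eq_sibsonValue (hα : 0 < α) {r : Y → X → ℝ}
    (hrpos : ∀ y x, 0 < r y x) :
    (sibsonF1 α pX pYX r : EReal) + renyiDE (1 / α)
        (reverseJoint (sibsonOutput α pX pYX) (sibsonReverse α pX pYX))
        (reverseJoint (sibsonOutput α pX pYX) r) = sibsonValue α pX pYX := by
  have hT := sibsonNorm_pos hpX hpYX (α := α)
  have hsum : ∑ x, ∑ y, pX x ^ (1 / α) * pYX x y * r y x ^ (1 - 1 / α)
      = sibsonNorm α pX pYX * ∑ z : X × Y,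
          reverseJoint (sibsonOutput α pX pYX) (sibsonReverse α pX pYX) z ^ (1 / α)
            * reverseJoint (sibsonOutput α pX pYX) r z ^ (1 - 1 / α) := by
    simp_rw [reverseJoint, mul_rpow_mul_mul_rpow _ (sibsonOutput_pos hpX hpYX _).le
      (sibsonReverse_pos hpX hpYX _ _).le (hrpos _ _).le, ← mul_assoc,
      sibsonOutput_mul_sibsonReverse_rpow hpX hpYX hα.ne', Fintype.sum_prod_type, mul_sum]
    field_simp
  have hpos : 0 < ∑ z : X × Y,
      reverseJoint (sibsonOutput α pX pYX) (sibsonReverse α pX pYX) z ^ (1 / α)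
        * reverseJoint (sibsonOutput α pX pYX) r z ^ (1 - 1 / α) :=
    sum_pos (fun z _ => mul_pos
      (Real.rpow_pos_of_pos
        (mul_pos (sibsonOutput_pos hpX hpYX _) (sibsonReverse_pos hpX hpYX _ _)) _)
      (Real.rpow_pos_of_pos (mul_pos (sibsonOutput_pos hpX hpYX _) (hrpos _ _)) _))
      univ_nonempty
  -- also at `α = 1`, where both sides are `0` because `x / 0 = 0`
  have hexp : 1 / (1 / α - 1) = -(α / (α - 1)) := by
    rw [div_sub_one hα.ne', one_div_div, ← neg_sub, div_neg]
  unfold renyiDE sibsonF1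
  rw [if_neg fun ⟨_, z, _, hz⟩ =>
      (mul_pos (sibsonOutput_pos hpX hpYX z.2) (hrpos z.2 z.1)).ne' hz,
    hsum, Real.log_mul hT.ne' hpos.ne', hexp, sibsonValue, ← EReal.coe_add]
  congr 1
  ring

theorem sibsonMI_eq_sibsonValue (hα : 0 < α) : sibsonMI α pX pYX = sibsonValue α pX pYX := by
  have hs := isPMF_sibsonOutput hpX hpYX (α := α)
  refine le_antisymm (sInf_le ⟨_, hs, ?_⟩) (le_sInf ?_)
  · rw [renyiDE_joint_eq_sibsonValue_add hpX hpYX hα hs, renyiDE_self hs, add_zero]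
  · rintro _ ⟨q, hq, rfl⟩
    rw [renyiDE_joint_eq_sibsonValue_add hpX hpYX hα hq]
    exact le_add_of_nonneg_right (renyiDE_nonneg hα.le hs hq)

theorem sibsonF1_le_sibsonValue (hα : 0 < α) {r : Y → X → ℝ} (hr : ∀ y, IsPMF (r y))
    (hrpos : ∀ y x, 0 < r y x) : sibsonF1 α pX pYX r ≤ sibsonValue α pX pYX := by
  have hs := isPMF_sibsonOutput hpX hpYX (α := α)
  rw [← EReal.coe_le_coe_iff, ← sibsonF1_add_renyiDE_eq_sibsonValue hpX hpYX hα hrpos]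
  exact le_add_of_nonneg_right (renyiDE_nonneg (by positivity)
    (isPMF_reverseJoint hs (isPMF_sibsonReverse hpX hpYX)) (isPMF_reverseJoint hs hr))

theorem sibsonF1_sibsonReverse (hα : 0 < α) :
    sibsonF1 α pX pYX (sibsonReverse α pX pYX) = sibsonValue α pX pYX := by
  have h := sibsonF1_add_renyiDE_eq_sibsonValue hpX hpYX hα (sibsonReverse_pos (α := α) hpX hpYX)
  rwa [renyiDE_self
      (isPMF_reverseJoint (isPMF_sibsonOutput hpX hpYX) (isPMF_sibsonReverse hpX hpYX)),
    add_zero, EReal.coe_eq_coe_iff] at h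

end Sibson

theorem sibsonMI_eq_sup_FS1_general {X Y : Type*} [Fintype X] [Fintype Y] [Nonempty X] [Nonempty Y]
    (α : ℝ) (hα : (0 < α ∧ α < 1) ∨ 1 < α)
    (pX : X → ℝ) (hpXpos : ∀ x, 0 < pX x)
    (pYX : X → Y → ℝ) (hpYXpos : ∀ x y, 0 < pYX x y) :
    IsGreatest
      {v : EReal | ∃ r : Y → X → ℝ, (∀ y, IsPMF (r y)) ∧ (∀ y x, 0 < r y x) ∧
        v = (((α / (α - 1)) * Real.log (∑ x, ∑ y,
              pX x ^ (1 / α) * pYX x y * r y x ^ (1 - 1 / α)) : ℝ) : EReal)}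
      (sibsonMI α pX pYX) := by
  have hα₀ : 0 < α := by rcases hα with ⟨h, -⟩ | h; exacts [h, one_pos.trans h]
  rw [sibsonMI_eq_sibsonValue hpXpos hpYXpos hα₀]
  refine ⟨⟨sibsonReverse α pX pYX, isPMF_sibsonReverse hpXpos hpYXpos,
    sibsonReverse_pos hpXpos hpYXpos,
    congrArg _ (sibsonF1_sibsonReverse hpXpos hpYXpos hα₀).symm⟩, ?_⟩
  rintro _ ⟨r, hr, hrpos, rfl⟩
  exact EReal.coe_le_coe_iff.2 (sibsonF1_le_sibsonValue hpXpos hpYXpos hα₀ hr hrpos)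

/-- The Sibson mutual information of order `α` is the supremum, over strictly positive
reverse channels `r_{X|Y}`, of
`F_α^{S1}(p_X, r) = (α/(α−1)) log Σ_{x,y} p_X(x)^{1/α} p_{Y|X}(y|x) r(x|y)^{1−1/α}`,
and the supremum is attained. -/
theorem sibsonMI_eq_sup_FS1 {X Y : Type*} [Fintype X] [Fintype Y] [Nonempty X] [Nonempty Y]
    (α : ℝ) (hα : (0 < α ∧ α < 1) ∨ 1 < α)
    (pX : X → ℝ) (hpX : IsPMF pX) (hpXpos : ∀ x, 0 < pX x)
    (pYX : X → Y → ℝ) (hpYX : ∀ x, IsPMF (pYX x)) (hpYXpos : ∀ x y, 0 < pYX x y) :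
    IsGreatest
      {v : EReal | ∃ r : Y → X → ℝ, (∀ y, IsPMF (r y)) ∧ (∀ y x, 0 < r y x) ∧
        v = (((α / (α - 1)) * Real.log (∑ x, ∑ y,
              pX x ^ (1 / α) * pYX x y * r y x ^ (1 - 1 / α)) : ℝ) : EReal)}
      (sibsonMI α pX pYX) :=
  sibsonMI_eq_sup_FS1_general α hα pX hpXpos pYX hpYXpos
end

section
/- Let α ∈ (0,1)∪(1,∞), let p_X be a strictly positive probability distribution on 𝒳 and p_{Y|X} a channel with p_{Y|X}(y|x) > 0 for all x, y. For a strictly positive reverse channel r_{X|Y}, define its α-tilted reverse channel by r_{X_α|Y}(x|y) := r_{X|Y}(x|y)^α / Σ_{x'} r_{X|Y}(x'|y)^α. Then I_α^S = sup over strictly positive reverse channels r_{X|Y} of F_α^{S2}(p_X, r_{X|Y}) := (α/(α−1)) · log Σ_{x,y} p_X(x)^{1/α} p_{Y|X}(y|x) r_{X_α|Y}(x|y)^{1−1/α}, and the supremum is attained. -/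
/-- The α-tilted reverse channel `r_{X_α|Y}(x|y) = r(x|y)^α / Σ_{x'} r(x'|y)^α`. -/
noncomputable def tiltRev {X Y : Type*} [Fintype X] (α : ℝ) (r : Y → X → ℝ) :
    Y → X → ℝ :=
  fun y x => r y x ^ α / ∑ x', r y x' ^ α

/-
Both sides equal `(α/(α-1)) log Σ_y c_y^{1/α}` with `c_y = Σ_x p_X(x) p_{Y|X}(y|x)^α`.
The Rényi sum in Sibson's definition is `Σ_y c_y q_Y(y)^{1-α}`; Hölder's inequality (`α < 1`)
or Jensen's inequality for `t ↦ t^α` (`α > 1`) compares it with `(Σ_y c_y^{1/α})^α` in the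
direction that bounds `(1/(α-1)) log` of it from below by that value, with equality at
`q_Y ∝ c^{1/α}`. For fixed `y`, the inner sum of `F_α^{S2}` is `Σ_x a_x^{1/α} w_x^{1-1/α}` with
`a_x = p_X(x) p_{Y|X}(y|x)^α` and `w = r_{X_α|Y}(·|y)` a distribution; the same two inequalities
at exponent `1/α` compare it with `c_y^{1/α}`, with equality when `w ∝ a`, i.e. for the tilt of
`r ∝ p_X^{1/α} p_{Y|X}`.
-/

open Finset Real

section PowerMeans
variable {ι : Type*} [Fintype ι]

theorem sum_rpow_mul_rpow_one_sub_le {θ : ℝ} (hθ0 : 0 < θ) (hθ1 : θ < 1) {a w : ι → ℝ}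
    (ha : ∀ i, 0 ≤ a i) (hw : ∀ i, 0 ≤ w i) :
    ∑ i, a i ^ θ * w i ^ (1 - θ) ≤ (∑ i, a i) ^ θ * (∑ i, w i) ^ (1 - θ) := by
  have hθ1' : 0 < 1 - θ := sub_pos.2 hθ1
  have := inner_le_Lp_mul_Lq_of_nonneg univ (holderConjugate_one_div hθ0 hθ1' (by ring))
    (f := fun i => a i ^ θ) (g := fun i => w i ^ (1 - θ))
    (fun i _ => rpow_nonneg (ha i) _) (fun i _ => rpow_nonneg (hw i) _)
  simpa [← rpow_mul (ha _), ← rpow_mul (hw _), hθ0.ne', hθ1'.ne'] using this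

theorem rpow_sum_le_sum_rpow_mul_rpow_one_sub {β : ℝ} (hβ : 1 ≤ β) {a w : ι → ℝ}
    (ha : ∀ i, 0 ≤ a i) (hw : ∀ i, 0 < w i) (hw1 : ∑ i, w i = 1) :
    (∑ i, a i) ^ β ≤ ∑ i, a i ^ β * w i ^ (1 - β) := by
  have hJensen := rpow_arith_mean_le_arith_mean_rpow univ w (fun i => a i / w i)
    (fun i _ => (hw i).le) hw1 (fun i _ => div_nonneg (ha i) (hw i).le) hβ
  have hmean : ∀ i, w i * (a i / w i) = a i := fun i => mul_div_cancel₀ _ (hw i).ne'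
  have hpow : ∀ i, w i * (a i / w i) ^ β = a i ^ β * w i ^ (1 - β) := fun i => by
    rw [div_rpow (ha i) (hw i).le, rpow_sub (hw i), rpow_one]
    field_simp
  simpa only [hmean, hpow] using hJensen

theorem sum_rpow_mul_div_sum_rpow_one_sub [Nonempty ι] (θ : ℝ) {a : ι → ℝ}
    (ha : ∀ i, 0 < a i) :
    ∑ i, a i ^ θ * (a i / ∑ j, a j) ^ (1 - θ) = (∑ i, a i) ^ θ := by
  have hA : 0 < ∑ j, a j := sum_pos (fun i _ => ha i) univ_nonempty
  have hterm : ∀ i, a i ^ θ * (a i / ∑ j, a j) ^ (1 - θ) = a i * (∑ j, a j) ^ (θ - 1) := by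
    intro i
    have := (rpow_pos_of_pos (ha i) θ).ne'
    rw [div_rpow (ha i).le hA.le, rpow_sub (ha i), rpow_sub hA, rpow_sub hA, rpow_one, rpow_one]
    field_simp
  rw [Finset.sum_congr rfl fun i _ => hterm i, ← sum_mul, rpow_sub hA, rpow_one]
  field_simp

theorem mul_rpow_rpow_one_div {α a b : ℝ} (hα : α ≠ 0) (ha : 0 ≤ a) (hb : 0 ≤ b) :
    (a * b ^ α) ^ (1 / α) = a ^ (1 / α) * b := by
  rw [mul_rpow ha (rpow_nonneg hb _), ← rpow_mul hb, mul_one_div_cancel hα, rpow_one]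

theorem rpow_one_div_mul_rpow {α a b : ℝ} (hα : α ≠ 0) (ha : 0 ≤ a) (hb : 0 ≤ b) :
    (a ^ (1 / α) * b) ^ α = a * b ^ α := by
  rw [← mul_rpow_rpow_one_div hα ha hb, one_div, rpow_inv_rpow (by positivity) hα]

end PowerMeans

section SibsonMinimization
variable {Y : Type*} [Fintype Y] [Nonempty Y] {α : ℝ}

theorem mul_log_sum_rpow_one_div_le (hα : (0 < α ∧ α < 1) ∨ 1 < α) {c q : Y → ℝ}
    (hc : ∀ y, 0 < c y) (hq : IsPMF q) (hq_pos : 1 < α → ∀ y, 0 < q y) :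
    α / (α - 1) * log (∑ y, c y ^ (1 / α)) ≤
      1 / (α - 1) * log (∑ y, c y * q y ^ (1 - α)) := by
  have hα0 : 0 < α := hα.elim And.left (lt_trans one_pos)
  set a : Y → ℝ := fun y => c y ^ (1 / α)
  have ha : ∀ y, 0 < a y := fun y => rpow_pos_of_pos (hc y) _
  have hca : ∀ y, c y = a y ^ α := fun y => by
    simp only [a, one_div, rpow_inv_rpow (hc y).le hα0.ne']
  have hS : 0 < ∑ y, a y := sum_pos (fun y _ => ha y) univ_nonempty
  have hlhs : α / (α - 1) * log (∑ y, a y) = 1 / (α - 1) * log ((∑ y, a y) ^ α) := by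
    rw [log_rpow hS]; ring
  simp only [hca]
  rw [hlhs]
  rcases hα with ⟨-, hα1⟩ | hα1
  · obtain ⟨y₀, -, hy₀⟩ : ∃ y ∈ univ, (0 : ℝ) < q y :=
      exists_lt_of_sum_lt (by simp [hq.2])
    have hT : 0 < ∑ y, a y ^ α * q y ^ (1 - α) :=
      sum_pos' (fun y _ => mul_nonneg (rpow_nonneg (ha y).le _) (rpow_nonneg (hq.1 y) _))
        ⟨y₀, mem_univ _, mul_pos (rpow_pos_of_pos (ha y₀) _) (rpow_pos_of_pos hy₀ _)⟩
    have hTS : ∑ y, a y ^ α * q y ^ (1 - α) ≤ (∑ y, a y) ^ α := by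
      simpa only [hq.2, one_rpow, mul_one] using
        sum_rpow_mul_rpow_one_sub_le hα0 hα1 (fun y => (ha y).le) hq.1
    exact mul_le_mul_of_nonpos_left (log_le_log hT hTS) (by rw [one_div_nonpos]; linarith)
  · have hST := rpow_sum_le_sum_rpow_mul_rpow_one_sub hα1.le (fun y => (ha y).le)
      (hq_pos hα1) hq.2
    exact mul_le_mul_of_nonneg_left (log_le_log (rpow_pos_of_pos hS _) hST)
      (by rw [one_div_nonneg]; linarith)

theorem sum_mul_rpow_one_sub_eq_rpow (hα : α ≠ 0) {c : Y → ℝ} (hc : ∀ y, 0 < c y) :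
    ∑ y, c y * (c y ^ (1 / α) / ∑ y', c y' ^ (1 / α)) ^ (1 - α) =
      (∑ y, c y ^ (1 / α)) ^ α := by
  have := sum_rpow_mul_div_sum_rpow_one_sub α (fun y => rpow_pos_of_pos (hc y) (1 / α))
  simpa only [one_div, rpow_inv_rpow (hc _).le hα] using this

end SibsonMinimization

section Sibson
variable {X Y : Type*} [Fintype X]

noncomputable def sibsonWeight (α : ℝ) (pX : X → ℝ) (pYX : X → Y → ℝ) (y : Y) : ℝ :=
  ∑ x, pX x * pYX x y ^ α

noncomputable def sibsonSum [Fintype Y] (α : ℝ) (pX : X → ℝ) (pYX : X → Y → ℝ) : ℝ :=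
  ∑ y, sibsonWeight α pX pYX y ^ (1 / α)

noncomputable def sibsonOutputDist [Fintype Y] (α : ℝ) (pX : X → ℝ) (pYX : X → Y → ℝ)
    (y : Y) : ℝ :=
  sibsonWeight α pX pYX y ^ (1 / α) / sibsonSum α pX pYX

variable {α : ℝ} {pX : X → ℝ} {pYX : X → Y → ℝ}

theorem sibsonWeight_pos [Nonempty X] (hpX : ∀ x, 0 < pX x) (hpYX : ∀ x y, 0 < pYX x y)
    (y : Y) : 0 < sibsonWeight α pX pYX y :=
  sum_pos (fun x _ => mul_pos (hpX x) (rpow_pos_of_pos (hpYX x y) α)) univ_nonempty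

variable [Fintype Y]

theorem sibsonSum_pos [Nonempty X] [Nonempty Y] (hpX : ∀ x, 0 < pX x)
    (hpYX : ∀ x y, 0 < pYX x y) : 0 < sibsonSum α pX pYX :=
  sum_pos (fun y _ => rpow_pos_of_pos (sibsonWeight_pos hpX hpYX y) _) univ_nonempty

theorem sibsonOutputDist_pos [Nonempty X] [Nonempty Y] (hpX : ∀ x, 0 < pX x)
    (hpYX : ∀ x y, 0 < pYX x y) (y : Y) : 0 < sibsonOutputDist α pX pYX y :=
  div_pos (rpow_pos_of_pos (sibsonWeight_pos hpX hpYX y) _) (sibsonSum_pos hpX hpYX)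

theorem isPMF_sibsonOutputDist [Nonempty X] [Nonempty Y] (hpX : ∀ x, 0 < pX x)
    (hpYX : ∀ x y, 0 < pYX x y) : IsPMF (sibsonOutputDist α pX pYX) :=
  ⟨fun y => (sibsonOutputDist_pos hpX hpYX y).le, by
    simp only [sibsonOutputDist]
    rw [← sum_div, ← sibsonSum, div_self (sibsonSum_pos hpX hpYX).ne']⟩

theorem sum_prod_rpow_mul_rpow_one_sub (hpX : ∀ x, 0 ≤ pX x) (hpYX : ∀ x y, 0 ≤ pYX x y)
    {q : Y → ℝ} (hq : ∀ y, 0 ≤ q y) :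
    ∑ z : X × Y, (pX z.1 * pYX z.1 z.2) ^ α * (pX z.1 * q z.2) ^ (1 - α) =
      ∑ y, sibsonWeight α pX pYX y * q y ^ (1 - α) := by
  rw [Fintype.sum_prod_type, sum_comm]
  refine sum_congr rfl fun y _ => ?_
  rw [sibsonWeight, sum_mul]
  refine sum_congr rfl fun x _ => ?_
  have hpX_pow : pX x ^ α * pX x ^ (1 - α) = pX x := by
    rw [← rpow_add' (hpX x) (by simp), add_sub_cancel, rpow_one]
  rw [mul_rpow (hpX x) (hpYX x y), mul_rpow (hpX x) (hq y)]
  linear_combination (pYX x y ^ α * q y ^ (1 - α)) * hpX_pow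

theorem coe_mul_log_sibsonSum_le_renyiDE [Nonempty X] [Nonempty Y]
    (hα : (0 < α ∧ α < 1) ∨ 1 < α) (hpX : ∀ x, 0 < pX x) (hpYX : ∀ x y, 0 < pYX x y)
    {q : Y → ℝ} (hq : IsPMF q) :
    ((α / (α - 1) * log (sibsonSum α pX pYX) : ℝ) : EReal) ≤
      renyiDE α (fun z : X × Y => pX z.1 * pYX z.1 z.2) (fun z => pX z.1 * q z.2) := by
  unfold renyiDE
  split_ifs with hinf
  · exact le_top
  have hq_pos : 1 < α → ∀ y, 0 < q y := fun hα1 y => (hq.1 y).lt_of_ne' fun hy =>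
    hinf ⟨hα1, (Classical.arbitrary X, y), (mul_pos (hpX _) (hpYX _ _)).ne', by simp [hy]⟩
  rw [sum_prod_rpow_mul_rpow_one_sub (fun x => (hpX x).le) (fun x y => (hpYX x y).le) hq.1]
  exact EReal.coe_le_coe
    (mul_log_sum_rpow_one_div_le hα (sibsonWeight_pos hpX hpYX) hq hq_pos)

theorem renyiDE_sibsonOutputDist [Nonempty X] [Nonempty Y] (hα : α ≠ 0)
    (hpX : ∀ x, 0 < pX x) (hpYX : ∀ x y, 0 < pYX x y) :
    renyiDE α (fun z : X × Y => pX z.1 * pYX z.1 z.2)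
        (fun z => pX z.1 * sibsonOutputDist α pX pYX z.2) =
      ((α / (α - 1) * log (sibsonSum α pX pYX) : ℝ) : EReal) := by
  have hq := sibsonOutputDist_pos (α := α) hpX hpYX
  rw [renyiDE, if_neg fun h => h.2.elim fun z hz => (mul_pos (hpX z.1) (hq z.2)).ne' hz.2,
    sum_prod_rpow_mul_rpow_one_sub (fun x => (hpX x).le) (fun x y => (hpYX x y).le)
      fun y => (hq y).le]
  simp only [sibsonOutputDist, sibsonSum]
  rw [sum_mul_rpow_one_sub_eq_rpow hα (sibsonWeight_pos hpX hpYX), ← sibsonSum,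
    log_rpow (sibsonSum_pos hpX hpYX)]
  congr 1
  ring

theorem sibsonMI_eq_mul_log_sibsonSum [Nonempty X] [Nonempty Y]
    (hα : (0 < α ∧ α < 1) ∨ 1 < α) (hpX : ∀ x, 0 < pX x) (hpYX : ∀ x y, 0 < pYX x y) :
    sibsonMI α pX pYX = ((α / (α - 1) * log (sibsonSum α pX pYX) : ℝ) : EReal) :=
  IsLeast.csInf_eq ⟨⟨sibsonOutputDist α pX pYX, isPMF_sibsonOutputDist hpX hpYX,
      (renyiDE_sibsonOutputDist (hα.elim (·.1.ne') fun h => (one_pos.trans h).ne')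
        hpX hpYX).symm⟩,
    by rintro v ⟨q, hq, rfl⟩; exact coe_mul_log_sibsonSum_le_renyiDE hα hpX hpYX hq⟩

end Sibson

section TiltRev
variable {X Y : Type*} [Fintype X] {α : ℝ}

theorem tiltRev_pos [Nonempty X] {r : Y → X → ℝ} (hr : ∀ y x, 0 < r y x) (y : Y) (x : X) :
    0 < tiltRev α r y x :=
  div_pos (rpow_pos_of_pos (hr y x) α) (sum_pos (fun x _ => rpow_pos_of_pos (hr y x) α)
    univ_nonempty)

theorem isPMF_tiltRev [Nonempty X] {r : Y → X → ℝ} (hr : ∀ y x, 0 < r y x) (y : Y) :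
    IsPMF (tiltRev α r y) := by
  have hR : 0 < ∑ x, r y x ^ α := sum_pos (fun x _ => rpow_pos_of_pos (hr y x) α) univ_nonempty
  refine ⟨fun x => (tiltRev_pos hr y x).le, ?_⟩
  simp only [tiltRev]
  rw [← sum_div, div_self hR.ne']

theorem tiltRev_div_right {r : Y → X → ℝ} (hr : ∀ y x, 0 ≤ r y x) {k : Y → ℝ}
    (hk : ∀ y, 0 < k y) : tiltRev α (fun y x => r y x / k y) = tiltRev α r := by
  ext y x
  have hkα := (rpow_pos_of_pos (hk y) α).ne'
  simp only [tiltRev, div_rpow (hr y _) (hk y).le, ← sum_div]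
  field_simp

noncomputable def sibsonRevChannel (α : ℝ) (pX : X → ℝ) (pYX : X → Y → ℝ) :
    Y → X → ℝ :=
  fun y x => pX x ^ (1 / α) * pYX x y / ∑ x', pX x' ^ (1 / α) * pYX x' y

variable [Nonempty X] {pX : X → ℝ} {pYX : X → Y → ℝ}

theorem sibsonRevChannel_pos (hpX : ∀ x, 0 < pX x) (hpYX : ∀ x y, 0 < pYX x y) (y : Y) (x : X) :
    0 < sibsonRevChannel α pX pYX y x :=
  div_pos (mul_pos (rpow_pos_of_pos (hpX x) _) (hpYX x y))
    (sum_pos (fun x _ => mul_pos (rpow_pos_of_pos (hpX x) _) (hpYX x y)) univ_nonempty)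

theorem isPMF_sibsonRevChannel (hpX : ∀ x, 0 < pX x) (hpYX : ∀ x y, 0 < pYX x y) (y : Y) :
    IsPMF (sibsonRevChannel α pX pYX y) := by
  have hN : 0 < ∑ x, pX x ^ (1 / α) * pYX x y :=
    sum_pos (fun x _ => mul_pos (rpow_pos_of_pos (hpX x) _) (hpYX x y)) univ_nonempty
  refine ⟨fun x => (sibsonRevChannel_pos hpX hpYX y x).le, ?_⟩
  simp only [sibsonRevChannel]
  rw [← sum_div, div_self hN.ne']

theorem tiltRev_sibsonRevChannel (hα : α ≠ 0) (hpX : ∀ x, 0 < pX x)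
    (hpYX : ∀ x y, 0 < pYX x y) (y : Y) (x : X) :
    tiltRev α (sibsonRevChannel α pX pYX) y x =
      pX x * pYX x y ^ α / ∑ x', pX x' * pYX x' y ^ α := by
  have hb : ∀ y x, 0 < pX x ^ (1 / α) * pYX x y := fun y x =>
    mul_pos (rpow_pos_of_pos (hpX x) _) (hpYX x y)
  unfold sibsonRevChannel
  rw [tiltRev_div_right (fun y x => (hb y x).le) fun y => sum_pos (fun x _ => hb y x) univ_nonempty]
  simp only [tiltRev, rpow_one_div_mul_rpow hα (hpX _).le (hpYX _ _).le]

end TiltRev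

section FS2
variable {X Y : Type*} [Fintype X] [Fintype Y]

noncomputable def FS2 (α : ℝ) (pX : X → ℝ) (pYX : X → Y → ℝ) (r : Y → X → ℝ) : ℝ :=
  α / (α - 1) *
    log (∑ x, ∑ y, pX x ^ (1 / α) * pYX x y * tiltRev α r y x ^ (1 - 1 / α))

variable {α : ℝ} {pX : X → ℝ} {pYX : X → Y → ℝ}

theorem FS2_eq (hα : α ≠ 0) (hpX : ∀ x, 0 ≤ pX x) (hpYX : ∀ x y, 0 ≤ pYX x y)
    (r : Y → X → ℝ) :
    FS2 α pX pYX r = α / (α - 1) * log (∑ y, ∑ x,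
      (pX x * pYX x y ^ α) ^ (1 / α) * tiltRev α r y x ^ (1 - 1 / α)) := by
  rw [FS2, sum_comm]
  simp only [mul_rpow_rpow_one_div hα (hpX _) (hpYX _ _)]

variable [Nonempty X]

theorem FS2_le_mul_log_sibsonSum [Nonempty Y]
    (hα : (0 < α ∧ α < 1) ∨ 1 < α) (hpX : ∀ x, 0 < pX x) (hpYX : ∀ x y, 0 < pYX x y)
    {r : Y → X → ℝ} (hr : ∀ y x, 0 < r y x) :
    FS2 α pX pYX r ≤ α / (α - 1) * log (sibsonSum α pX pYX) := by
  have hα0 : 0 < α := hα.elim And.left (lt_trans one_pos)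
  have ha : ∀ x y, 0 < pX x * pYX x y ^ α := fun x y =>
    mul_pos (hpX x) (rpow_pos_of_pos (hpYX x y) α)
  rw [FS2_eq hα0.ne' (fun x => (hpX x).le) (fun x y => (hpYX x y).le)]
  set G := ∑ y, ∑ x, (pX x * pYX x y ^ α) ^ (1 / α) * tiltRev α r y x ^ (1 - 1 / α)
  have hG : 0 < G :=
    sum_pos (fun y _ => sum_pos (fun x _ => mul_pos (rpow_pos_of_pos (ha x y) _)
      (rpow_pos_of_pos (tiltRev_pos hr y x) _)) univ_nonempty) univ_nonempty
  rcases hα with ⟨-, hα1⟩ | hα1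
  · have hSG : sibsonSum α pX pYX ≤ G :=
      sum_le_sum fun y _ => rpow_sum_le_sum_rpow_mul_rpow_one_sub (one_le_one_div hα0 hα1.le)
        (fun x => (ha x y).le) (tiltRev_pos hr y) (isPMF_tiltRev hr y).2
    exact mul_le_mul_of_nonpos_left (log_le_log (sibsonSum_pos hpX hpYX) hSG)
      (div_nonpos_of_nonneg_of_nonpos hα0.le (by linarith))
  · have hGS : G ≤ sibsonSum α pX pYX := sum_le_sum fun y _ => by
      have h := sum_rpow_mul_rpow_one_sub_le (by positivity) ((div_lt_one hα0).2 hα1)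
        (fun x => (ha x y).le) (isPMF_tiltRev (α := α) hr y).1
      rwa [(isPMF_tiltRev hr y).2, one_rpow, mul_one] at h
    exact mul_le_mul_of_nonneg_left (log_le_log hG hGS) (div_nonneg hα0.le (by linarith))

theorem FS2_sibsonRevChannel (hα : α ≠ 0) (hpX : ∀ x, 0 < pX x)
    (hpYX : ∀ x y, 0 < pYX x y) :
    FS2 α pX pYX (sibsonRevChannel α pX pYX) = α / (α - 1) * log (sibsonSum α pX pYX) := by
  rw [FS2_eq hα (fun x => (hpX x).le) (fun x y => (hpYX x y).le)]
  simp only [tiltRev_sibsonRevChannel hα hpX hpYX,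
    sum_rpow_mul_div_sum_rpow_one_sub _ fun x => mul_pos (hpX x) (rpow_pos_of_pos (hpYX x _) α)]
  rfl

end FS2

theorem sibsonMI_eq_sup_FS2_general {X Y : Type*} [Fintype X] [Fintype Y] [Nonempty X] [Nonempty Y]
    (α : ℝ) (hα : (0 < α ∧ α < 1) ∨ 1 < α)
    (pX : X → ℝ) (hpXpos : ∀ x, 0 < pX x)
    (pYX : X → Y → ℝ) (hpYXpos : ∀ x y, 0 < pYX x y) :
    IsGreatest
      {v : EReal | ∃ r : Y → X → ℝ, (∀ y, IsPMF (r y)) ∧ (∀ y x, 0 < r y x) ∧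
        v = (((α / (α - 1)) * Real.log (∑ x, ∑ y,
              pX x ^ (1 / α) * pYX x y * tiltRev α r y x ^ (1 - 1 / α)) : ℝ) : EReal)}
      (sibsonMI α pX pYX) := by
  have hα0 : α ≠ 0 := hα.elim (·.1.ne') fun h => (one_pos.trans h).ne'
  rw [sibsonMI_eq_mul_log_sibsonSum hα hpXpos hpYXpos]
  refine ⟨⟨sibsonRevChannel α pX pYX, isPMF_sibsonRevChannel hpXpos hpYXpos,
    sibsonRevChannel_pos hpXpos hpYXpos,
    congrArg _ (FS2_sibsonRevChannel hα0 hpXpos hpYXpos).symm⟩, ?_⟩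
  rintro v ⟨r, -, hr, rfl⟩
  exact EReal.coe_le_coe (FS2_le_mul_log_sibsonSum hα hpXpos hpYXpos hr)

/-- The Sibson mutual information of order `α` is the supremum, over strictly positive
reverse channels `r_{X|Y}`, of
`F_α^{S2}(p_X, r) = (α/(α−1)) log Σ_{x,y} p_X(x)^{1/α} p_{Y|X}(y|x) r_{X_α|Y}(x|y)^{1−1/α}`,
where `r_{X_α|Y}` is the α-tilt of `r`, and the supremum is attained. -/
theorem sibsonMI_eq_sup_FS2 {X Y : Type*} [Fintype X] [Fintype Y] [Nonempty X] [Nonempty Y]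
    (α : ℝ) (hα : (0 < α ∧ α < 1) ∨ 1 < α)
    (pX : X → ℝ) (hpX : IsPMF pX) (hpXpos : ∀ x, 0 < pX x)
    (pYX : X → Y → ℝ) (hpYX : ∀ x, IsPMF (pYX x)) (hpYXpos : ∀ x y, 0 < pYX x y) :
    IsGreatest
      {v : EReal | ∃ r : Y → X → ℝ, (∀ y, IsPMF (r y)) ∧ (∀ y x, 0 < r y x) ∧
        v = (((α / (α - 1)) * Real.log (∑ x, ∑ y,
              pX x ^ (1 / α) * pYX x y * tiltRev α r y x ^ (1 - 1 / α)) : ℝ) : EReal)}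
      (sibsonMI α pX pYX) :=
  sibsonMI_eq_sup_FS2_general α hα pX hpXpos pYX hpYXpos
end

section
/- Let α ∈ (0,1), let p_X be a strictly positive probability distribution on 𝒳 and p_{Y|X} a channel with p_{Y|X}(y|x) > 0 for all x, y. Then I_α^C = inf over channels q̃_{Y|X} and strictly positive probability distributions q_Y on 𝒴 of F_α^C(q̃_{Y|X}, q_Y) := (α/(1−α)) D(p_X q̃_{Y|X} ‖ p_X p_{Y|X}) + D(p_X q̃_{Y|X} ‖ p_X q_Y), and the infimum is attained. -/
/-- Kullback--Leibler divergence (natural log). -/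
noncomputable def klD {Z : Type*} [Fintype Z] (p q : Z → ℝ) : ℝ :=
  ∑ z, p z * Real.log (p z / q z)

/-- Augustin--Csiszár mutual information of order `α`. -/
noncomputable def acMI {X Y : Type*} [Fintype X] [Fintype Y]
    (α : ℝ) (pX : X → ℝ) (pYX : X → Y → ℝ) : EReal :=
  sInf {v : EReal | ∃ qY : Y → ℝ, IsPMF qY ∧
    v = ∑ x, ((pX x : ℝ) : EReal) * renyiDE α (fun y => pYX x y) qY}

/-!
For `α < 1`, a distribution `r` and positive `p`, `q`, the tilted distribution
`r⋆ ∝ p ^ α * q ^ (1 - α)` satisfies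
`α/(1-α) D(r‖p) + D(r‖q) = D_α(p‖q) + D(r‖r⋆)/(1-α)`.
By Gibbs' inequality the minimum over the channel `q̃` is therefore `D_α(p_{Y|X}(·|x)‖q_Y)`,
attained at the tilted channel, so the double infimum is the minimum of the Augustin
objective `q ↦ ∑ₓ p_X(x) D_α(p_{Y|X}(·|x)‖q)` over strictly positive `q`.
The restriction to positive `q` costs nothing: a minimiser over the whole simplex has full
support, since moving mass `t` onto an empty coordinate raises every `∑ p ^ α q ^ (1 - α)` by
order `t ^ (1 - α)` while lowering it only by order `t`.
-/

open Real Finset Filter Topology InformationTheory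

section Divergences

variable {Z : Type*} [Fintype Z]

noncomputable def renyiSum (α : ℝ) (p q : Z → ℝ) : ℝ :=
  ∑ z, p z ^ α * q z ^ (1 - α)

noncomputable def renyiD (α : ℝ) (p q : Z → ℝ) : ℝ :=
  1 / (α - 1) * log (renyiSum α p q)

noncomputable def tilt (α : ℝ) (p q : Z → ℝ) (z : Z) : ℝ :=
  p z ^ α * q z ^ (1 - α) / renyiSum α p q

lemma EReal.coe_finset_sum {ι : Type*} (s : Finset ι) (f : ι → ℝ) :
    ((∑ i ∈ s, f i : ℝ) : EReal) = ∑ i ∈ s, (f i : EReal) := by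
  induction s using Finset.cons_induction with
  | empty => simp
  | cons a s ha ih => rw [sum_cons, sum_cons, EReal.coe_add, ih]

lemma renyiDE_of_le_one {α : ℝ} (hα : α ≤ 1) (p q : Z → ℝ) :
    renyiDE α p q = renyiD α p q :=
  if_neg fun h => (not_lt.2 hα) h.1

lemma klD_eq_sub {r s : Z → ℝ} (hs : ∀ z, 0 < s z) :
    klD r s = ∑ z, r z * log (r z) - ∑ z, r z * log (s z) := by
  rw [klD, ← sum_sub_distrib]
  refine sum_congr rfl fun z _ => ?_
  rcases eq_or_ne (r z) 0 with h | h
  · simp [h]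
  · rw [log_div h (hs z).ne']
    ring

lemma klD_nonneg {r s : Z → ℝ} (hr : ∀ z, 0 ≤ r z) (hs : ∀ z, 0 < s z)
    (hrs : ∑ z, r z = ∑ z, s z) : 0 ≤ klD r s := by
  have hterm : ∀ z, r z * log (r z / s z) = s z * klFun (r z / s z) + (r z - s z) := by
    intro z
    rw [klFun_apply]
    field_simp [(hs z).ne']
    ring
  rw [klD, sum_congr rfl fun z _ => hterm z, sum_add_distrib, sum_sub_distrib, hrs, sub_self,
    add_zero]
  exact sum_nonneg fun z _ => mul_nonneg (hs z).le (klFun_nonneg (div_nonneg (hr z) (hs z).le))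

lemma klD_self (r : Z → ℝ) : klD r r = 0 := by
  refine sum_eq_zero fun z _ => ?_
  rcases eq_or_ne (r z) 0 with h | h <;> simp [h]

lemma renyiSum_pos {α : ℝ} {p q : Z → ℝ} (hp : ∀ z, 0 < p z) (hq : IsPMF q) :
    0 < renyiSum α p q := by
  obtain ⟨z, -, hz⟩ : ∃ z ∈ univ, (0 : ℝ) < q z :=
    exists_lt_of_sum_lt (by simp [hq.2])
  exact sum_pos' (fun z _ => mul_nonneg (rpow_nonneg (hp z).le _) (rpow_nonneg (hq.1 z) _))
    ⟨z, mem_univ z, mul_pos (rpow_pos_of_pos (hp z) _) (rpow_pos_of_pos hz _)⟩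

lemma continuousOn_renyiD {α : ℝ} (hα : α ≤ 1) {p : Z → ℝ} (hp : ∀ z, 0 < p z) :
    ContinuousOn (renyiD α p) (stdSimplex ℝ Z) := by
  have hsum : Continuous (renyiSum α p) :=
    continuous_finsetSum _ fun z _ =>
      continuous_const.mul ((continuous_apply z).rpow_const fun _ => Or.inr (by linarith))
  exact continuousOn_const.mul
    (hsum.continuousOn.log fun q hq => (renyiSum_pos hp hq).ne')

section Tilt

variable {α : ℝ} {p q : Z → ℝ} (hp : ∀ z, 0 < p z) (hq : IsPMF q) (hq₀ : ∀ z, 0 < q z)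
include hp hq hq₀

lemma tilt_pos (z : Z) : 0 < tilt α p q z :=
  div_pos (mul_pos (rpow_pos_of_pos (hp z) _) (rpow_pos_of_pos (hq₀ z) _)) (renyiSum_pos hp hq)

lemma isPMF_tilt : IsPMF (tilt α p q) :=
  ⟨fun z => (tilt_pos hp hq hq₀ z).le, by
    unfold tilt
    rw [← sum_div]
    exact div_self (renyiSum_pos hp hq).ne'⟩

lemma log_tilt (z : Z) :
    log (tilt α p q z) = α * log (p z) + (1 - α) * log (q z) - log (renyiSum α p q) := by
  have hp' := rpow_pos_of_pos (hp z) α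
  have hq' := rpow_pos_of_pos (hq₀ z) (1 - α)
  rw [tilt, log_div (mul_pos hp' hq').ne' (renyiSum_pos hp hq).ne', log_mul hp'.ne' hq'.ne',
    log_rpow (hp z), log_rpow (hq₀ z)]

lemma klD_add_klD_eq_renyiD_add_klD_tilt (hα : α ≠ 1) {r : Z → ℝ} (hr : IsPMF r) :
    α / (1 - α) * klD r p + klD r q = renyiD α p q + klD r (tilt α p q) / (1 - α) := by
  have hlog : ∑ z, r z * log (tilt α p q z) =
      α * ∑ z, r z * log (p z) + (1 - α) * ∑ z, r z * log (q z) - log (renyiSum α p q) :=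
    calc ∑ z, r z * log (tilt α p q z)
        = ∑ z, (α * (r z * log (p z)) + (1 - α) * (r z * log (q z))
            - r z * log (renyiSum α p q)) :=
          sum_congr rfl fun z _ => by rw [log_tilt hp hq hq₀]; ring
      _ = _ := by rw [sum_sub_distrib, sum_add_distrib, ← mul_sum, ← mul_sum, ← sum_mul, hr.2,
          one_mul]
  have h1 : (1 : ℝ) - α ≠ 0 := sub_ne_zero.2 hα.symm
  have h2 : α - 1 ≠ 0 := sub_ne_zero.2 hα
  rw [klD_eq_sub hp, klD_eq_sub hq₀, klD_eq_sub (tilt_pos hp hq hq₀), hlog, renyiD]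
  field_simp
  ring

lemma renyiD_le_klD_add_klD (hα : α < 1) {r : Z → ℝ} (hr : IsPMF r) :
    renyiD α p q ≤ α / (1 - α) * klD r p + klD r q := by
  rw [klD_add_klD_eq_renyiD_add_klD_tilt hp hq hq₀ hα.ne hr]
  have hgibbs := klD_nonneg hr.1 (tilt_pos hp hq hq₀)
    (by rw [hr.2, (isPMF_tilt (α := α) hp hq hq₀).2])
  have : 0 ≤ klD r (tilt α p q) / (1 - α) := div_nonneg hgibbs (by linarith)
  linarith

lemma klD_tilt_add_klD_tilt (hα : α ≠ 1) :
    α / (1 - α) * klD (tilt α p q) p + klD (tilt α p q) q = renyiD α p q := by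
  rw [klD_add_klD_eq_renyiD_add_klD_tilt hp hq hq₀ hα (isPMF_tilt hp hq hq₀), klD_self,
    zero_div, add_zero]

end Tilt

lemma renyiSum_smul_add_smul_single {α : ℝ} (hα : α < 1) {p q : Z → ℝ} (hq : ∀ z, 0 ≤ q z)
    [DecidableEq Z] {z₀ : Z} (hz₀ : q z₀ = 0) {t : ℝ} (ht : t ≤ 1) :
    renyiSum α p ((1 - t) • q + t • Pi.single z₀ 1) =
      (1 - t) ^ (1 - α) * renyiSum α p q + p z₀ ^ α * t ^ (1 - α) := by
  have hterm : ∀ z, p z ^ α * ((1 - t) • q + t • (Pi.single z₀ 1 : Z → ℝ)) z ^ (1 - α) =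
      (1 - t) ^ (1 - α) * (p z ^ α * q z ^ (1 - α)) +
        (Pi.single z₀ (p z₀ ^ α * t ^ (1 - α)) : Z → ℝ) z := by
    intro z
    by_cases hz : z = z₀
    · subst hz
      simp [hz₀, zero_rpow (sub_ne_zero.2 hα.ne')]
    · simp only [Pi.add_apply, Pi.smul_apply, smul_eq_mul, Pi.single_apply, hz, if_false,
        mul_zero, add_zero, mul_rpow (sub_nonneg.2 ht) (hq z)]
      ring
  rw [renyiSum, renyiSum, sum_congr rfl fun z _ => hterm z, sum_add_distrib, ← mul_sum,
    sum_pi_single', if_pos (mem_univ z₀)]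

lemma eventually_renyiSum_lt_smul_add_smul_single {α : ℝ} (hα : 0 < α ∧ α < 1) {p q : Z → ℝ}
    (hp : ∀ z, 0 < p z) (hq : IsPMF q) [DecidableEq Z] {z₀ : Z} (hz₀ : q z₀ = 0) :
    ∀ᶠ t in 𝓝[>] (0 : ℝ), renyiSum α p q < renyiSum α p ((1 - t) • q + t • Pi.single z₀ 1) := by
  set S := renyiSum α p q
  have hS : 0 < S := renyiSum_pos hp hq
  have hc : 0 < p z₀ ^ α := rpow_pos_of_pos (hp z₀) α
  have hsmall : ∀ᶠ t in 𝓝[>] (0 : ℝ), t ^ α < p z₀ ^ α / S := by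
    have : Tendsto (fun t : ℝ => t ^ α) (𝓝[>] 0) (𝓝 0) := by
      simpa [zero_rpow hα.1.ne'] using
        ((continuousAt_rpow_const 0 α (Or.inr hα.1.le)).tendsto.mono_left nhdsWithin_le_nhds)
    exact this.eventually_lt_const (div_pos hc hS)
  filter_upwards [hsmall, Ioo_mem_nhdsGT one_pos] with t hts ht
  rw [renyiSum_smul_add_smul_single hα.2 hq.1 hz₀ ht.2.le]
  have h1t : 1 - t ≤ (1 - t) ^ (1 - α) :=
    self_le_rpow_of_le_one (by linarith [ht.2]) (by linarith [ht.1]) (by linarith)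
  have hgain : t * S < p z₀ ^ α * t ^ (1 - α) := by
    have ht' := rpow_pos_of_pos ht.1 (1 - α)
    calc t * S = t ^ α * S * t ^ (1 - α) := by
          rw [mul_right_comm, ← rpow_add ht.1, add_sub_cancel, rpow_one]
      _ < p z₀ ^ α * t ^ (1 - α) :=
          mul_lt_mul_of_pos_right ((lt_div_iff₀ hS).1 hts) ht'
  linarith [mul_le_mul_of_nonneg_right h1t hS.le]

end Divergences

section Augustin

variable {X Y : Type*} [Fintype X] [Fintype Y]

noncomputable def acObjective (α : ℝ) (pX : X → ℝ) (pYX : X → Y → ℝ) (q : Y → ℝ) : ℝ :=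
  ∑ x, pX x * renyiD α (pYX x) q

lemma acMI_eq_of_isMinOn {α : ℝ} (hα : α ≤ 1) {pX : X → ℝ} {pYX : X → Y → ℝ} {q : Y → ℝ}
    (hq : q ∈ stdSimplex ℝ Y) (hmin : IsMinOn (acObjective α pX pYX) (stdSimplex ℝ Y) q) :
    acMI α pX pYX = acObjective α pX pYX q := by
  have hval : ∀ q' : Y → ℝ, ∑ x, (pX x : EReal) * renyiDE α (fun y => pYX x y) q' =
      acObjective α pX pYX q' := fun q' => by
    simp only [acObjective, EReal.coe_finset_sum, EReal.coe_mul, renyiDE_of_le_one hα]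
  refine IsLeast.csInf_eq ⟨⟨q, hq, (hval q).symm⟩, ?_⟩
  rintro _ ⟨q', hq', rfl⟩
  rw [hval]
  exact EReal.coe_le_coe_iff.2 (isMinOn_iff.1 hmin q' hq')

lemma exists_isMinOn_acObjective [Nonempty Y] {α : ℝ} (hα : α ≤ 1) (pX : X → ℝ)
    {pYX : X → Y → ℝ} (hpYX : ∀ x y, 0 < pYX x y) :
    ∃ q ∈ stdSimplex ℝ Y, IsMinOn (acObjective α pX pYX) (stdSimplex ℝ Y) q := by
  classical
  exact (isCompact_stdSimplex ℝ Y).exists_isMinOn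
    ⟨_, single_mem_stdSimplex ℝ (Classical.arbitrary Y)⟩ (continuousOn_finsetSum _ fun x _ =>
      continuousOn_const.mul (continuousOn_renyiD hα (hpYX x)))

lemma pos_of_isMinOn_acObjective {α : ℝ} (hα : 0 < α ∧ α < 1) {pX : X → ℝ} (hpX : IsPMF pX)
    {pYX : X → Y → ℝ} (hpYX : ∀ x y, 0 < pYX x y) {q : Y → ℝ} (hq : q ∈ stdSimplex ℝ Y)
    (hmin : IsMinOn (acObjective α pX pYX) (stdSimplex ℝ Y) q) (y : Y) : 0 < q y := by
  classical
  refine (hq.1 y).lt_of_ne fun hy => ?_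
  obtain ⟨x₀, -, hx₀⟩ : ∃ x ∈ univ, (0 : ℝ) < pX x :=
    exists_lt_of_sum_lt (by simp [hpX.2])
  have hsmaller : ∀ᶠ t in 𝓝[>] (0 : ℝ), t ∈ Set.Ioc 0 1 ∧
      ∀ x, renyiD α (pYX x) ((1 - t) • q + t • Pi.single y 1) < renyiD α (pYX x) q := by
    have hneg : 1 / (α - 1) < 0 := one_div_neg.2 (by linarith [hα.2])
    filter_upwards [Ioc_mem_nhdsGT one_pos, eventually_all.2 fun x =>
      eventually_renyiSum_lt_smul_add_smul_single hα (hpYX x) hq hy.symm] with t ht hlt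
    exact ⟨ht, fun x => mul_lt_mul_of_neg_left
      (log_lt_log (renyiSum_pos (hpYX x) hq) (hlt x)) hneg⟩
  obtain ⟨t, ht, hlt⟩ := hsmaller.exists
  have hmem : (1 - t) • q + t • Pi.single y 1 ∈ stdSimplex ℝ Y :=
    convex_stdSimplex ℝ Y hq (single_mem_stdSimplex ℝ y) (by linarith [ht.2]) ht.1.le
      (sub_add_cancel 1 t)
  refine (isMinOn_iff.1 hmin _ hmem).not_gt (sum_lt_sum (fun x _ => ?_) ⟨x₀, mem_univ x₀, ?_⟩)
  · exact mul_le_mul_of_nonneg_left (hlt x).le (hpX.1 x)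
  · exact mul_lt_mul_of_pos_left (hlt x₀) hx₀

lemma klD_prod_eq_sum (pX : X → ℝ) (a b : X → Y → ℝ) :
    klD (fun z : X × Y => pX z.1 * a z.1 z.2) (fun z : X × Y => pX z.1 * b z.1 z.2) =
      ∑ x, pX x * klD (a x) (b x) := by
  rw [klD, Fintype.sum_prod_type]
  refine sum_congr rfl fun x _ => ?_
  rw [klD, mul_sum]
  refine sum_congr rfl fun y _ => ?_
  rcases eq_or_ne (pX x) 0 with h | h
  · simp [h]
  · rw [mul_div_mul_left _ _ h]
    ring

lemma mul_klD_prod_add_klD_prod (c : ℝ) (pX : X → ℝ) (qt p : X → Y → ℝ) (qY : Y → ℝ) :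
    c * klD (fun z : X × Y => pX z.1 * qt z.1 z.2) (fun z : X × Y => pX z.1 * p z.1 z.2)
        + klD (fun z : X × Y => pX z.1 * qt z.1 z.2) (fun z : X × Y => pX z.1 * qY z.2) =
      ∑ x, pX x * (c * klD (qt x) (p x) + klD (qt x) qY) := by
  rw [klD_prod_eq_sum pX qt p, klD_prod_eq_sum pX qt fun _ => qY, mul_sum, ← sum_add_distrib]
  exact sum_congr rfl fun x _ => by ring

end Augustin

theorem acMI_eq_inf_FC_general {X Y : Type*} [Fintype X] [Fintype Y] [Nonempty Y]
    (α : ℝ) (hα : 0 < α ∧ α < 1)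
    (pX : X → ℝ) (hpX : IsPMF pX)
    (pYX : X → Y → ℝ) (hpYXpos : ∀ x y, 0 < pYX x y) :
    IsLeast
      {v : EReal | ∃ qt : X → Y → ℝ, (∀ x, IsPMF (qt x)) ∧
        ∃ qY : Y → ℝ, IsPMF qY ∧ (∀ y, 0 < qY y) ∧
        v = (((α / (1 - α)) *
                klD (fun z : X × Y => pX z.1 * qt z.1 z.2)
                    (fun z : X × Y => pX z.1 * pYX z.1 z.2)
              + klD (fun z : X × Y => pX z.1 * qt z.1 z.2)
                    (fun z : X × Y => pX z.1 * qY z.2) : ℝ) : EReal)}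
      (acMI α pX pYX) := by
  obtain ⟨qs, hqs, hmin⟩ := exists_isMinOn_acObjective hα.2.le pX hpYXpos
  have hqs₀ := pos_of_isMinOn_acObjective hα hpX hpYXpos hqs hmin
  rw [acMI_eq_of_isMinOn hα.2.le hqs hmin]
  refine ⟨⟨fun x => tilt α (pYX x) qs, fun x => isPMF_tilt (hpYXpos x) hqs hqs₀,
    qs, hqs, hqs₀, ?_⟩, ?_⟩
  · have hFtilt :=
      mul_klD_prod_add_klD_prod (α / (1 - α)) pX (fun x => tilt α (pYX x) qs) pYX qs
    simp only [klD_tilt_add_klD_tilt (hpYXpos _) hqs hqs₀ hα.2.ne] at hFtilt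
    rw [acObjective, ← hFtilt]
  · rintro _ ⟨qt, hqt, qY, hqY, hqY₀, rfl⟩
    rw [mul_klD_prod_add_klD_prod]
    exact EReal.coe_le_coe_iff.2 <| (isMinOn_iff.1 hmin qY hqY).trans <| sum_le_sum fun x _ =>
      mul_le_mul_of_nonneg_left (renyiD_le_klD_add_klD (hpYXpos x) hqY hqY₀ hα.2 (hqt x))
        (hpX.1 x)

/-- For `α ∈ (0,1)`, the Augustin--Csiszár mutual information of order `α` is the infimum,
over channels `q̃_{Y|X}` and strictly positive output distributions `q_Y`, of
`F_α^C(q̃_{Y|X}, q_Y) = (α/(1−α)) D(p_X q̃_{Y|X} ‖ p_X p_{Y|X}) + D(p_X q̃_{Y|X} ‖ p_X q_Y)`,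
and the infimum is attained. -/
theorem acMI_eq_inf_FC {X Y : Type*} [Fintype X] [Fintype Y] [Nonempty X] [Nonempty Y]
    (α : ℝ) (hα : 0 < α ∧ α < 1)
    (pX : X → ℝ) (hpX : IsPMF pX) (hpXpos : ∀ x, 0 < pX x)
    (pYX : X → Y → ℝ) (hpYX : ∀ x, IsPMF (pYX x)) (hpYXpos : ∀ x y, 0 < pYX x y) :
    IsLeast
      {v : EReal | ∃ qt : X → Y → ℝ, (∀ x, IsPMF (qt x)) ∧
        ∃ qY : Y → ℝ, IsPMF qY ∧ (∀ y, 0 < qY y) ∧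
        v = (((α / (1 - α)) *
                klD (fun z : X × Y => pX z.1 * qt z.1 z.2)
                    (fun z : X × Y => pX z.1 * pYX z.1 z.2)
              + klD (fun z : X × Y => pX z.1 * qt z.1 z.2)
                    (fun z : X × Y => pX z.1 * qY z.2) : ℝ) : EReal)}
      (acMI α pX pYX) :=
  acMI_eq_inf_FC_general α hα pX hpX pYX hpYXpos
end

section
/- Let α ∈ (1,∞), let p_X be a strictly positive probability distribution on 𝒳 and p_{Y|X} a channel with p_{Y|X}(y|x) > 0 for all x, y. Then I_α^C = sup over channels q̃_{Y|X} and strictly positive reverse channels r_{X|Y} of F̃_α^C(q̃_{Y|X}, r_{X|Y}) := (α/(1−α)) D(p_X q̃_{Y|X} ‖ p_X p_{Y|X}) + Σ_{x,y} p_X(x) q̃_{Y|X}(y|x) log( r_{X|Y}(x|y) / p_X(x) ), and the supremum is attained. -/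
/-!
For each `x` the Rényi divergence has the variational form
`D_α(p‖q) = max_w [D(w‖q) + α/(1-α) D(w‖p)]`, attained at the tilted distribution
`w ∝ p^α q^(1-α)`. Since `Σ pX qt log (r / pX) = Σ_x pX D(qt_x‖q) - D(pX qt ‖ r q)` for every
positive distribution `q`, Gibbs' inequality then gives `F̃(qt, r) ≤ Σ_x pX D_α(p_x‖q)`. Both
inequalities are equalities when `q` is the Augustin mean, a fixed point of
`q ↦ Σ_x pX tilt_x(q)`, `qt_x = tilt_x(q)` and `r = pX qt / q`; distributions `q` with a zero give
`D_α = ∞` as `α > 1`. The Augustin mean exists because the objective blows up at the boundary of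
the simplex: it has an interior minimizer, whose first-order conditions are the fixed-point
equation.
-/

open Finset Real

section Divergence

variable {Z : Type*} [Fintype Z]

theorem klD_nonneg_s5 {a b : Z → ℝ} (ha : IsPMF a) (hb : ∀ z, 0 < b z) (hb1 : ∑ z, b z ≤ 1) :
    0 ≤ klD a b := by
  have hterm : ∀ z, a z - b z ≤ a z * log (a z / b z) := by
    intro z
    rcases (ha.1 z).eq_or_lt with h | h
    · simp [← h, (hb z).le]
    · have := one_sub_inv_le_log_of_pos (div_pos h (hb z))
      rw [inv_div] at this
      calc a z - b z = a z * (1 - b z / a z) := by field_simp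
        _ ≤ _ := mul_le_mul_of_nonneg_left this h.le
  calc 0 ≤ ∑ z, (a z - b z) := by rw [sum_sub_distrib, ha.2]; linarith
    _ ≤ klD a b := sum_le_sum fun z _ => hterm z

noncomputable def renyiDiv (α : ℝ) (p q : Z → ℝ) : ℝ :=
  1 / (α - 1) * log (∑ z, p z ^ α * q z ^ (1 - α))

noncomputable def renyiTilt (α : ℝ) (p q : Z → ℝ) (z : Z) : ℝ :=
  p z ^ α * q z ^ (1 - α) / ∑ z', p z' ^ α * q z' ^ (1 - α)

variable {α : ℝ} {p q : Z → ℝ}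

theorem sum_rpow_mul_rpow_pos [Nonempty Z] (hp : ∀ z, 0 < p z) (hq : ∀ z, 0 < q z) :
    0 < ∑ z, p z ^ α * q z ^ (1 - α) :=
  sum_pos (fun z _ => mul_pos (rpow_pos_of_pos (hp z) _) (rpow_pos_of_pos (hq z) _))
    univ_nonempty

theorem renyiTilt_pos [Nonempty Z] (hp : ∀ z, 0 < p z) (hq : ∀ z, 0 < q z) (z : Z) :
    0 < renyiTilt α p q z :=
  div_pos (mul_pos (rpow_pos_of_pos (hp z) _) (rpow_pos_of_pos (hq z) _))
    (sum_rpow_mul_rpow_pos hp hq)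

theorem sum_renyiTilt [Nonempty Z] (hp : ∀ z, 0 < p z) (hq : ∀ z, 0 < q z) :
    ∑ z, renyiTilt α p q z = 1 := by
  simp only [renyiTilt]
  rw [← sum_div, div_self (sum_rpow_mul_rpow_pos hp hq).ne']

theorem isPMF_renyiTilt [Nonempty Z] (hp : ∀ z, 0 < p z) (hq : ∀ z, 0 < q z) :
    IsPMF (renyiTilt α p q) :=
  ⟨fun z => (renyiTilt_pos hp hq z).le, sum_renyiTilt hp hq⟩

theorem log_renyiTilt [Nonempty Z] (hp : ∀ z, 0 < p z) (hq : ∀ z, 0 < q z) (z : Z) :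
    log (renyiTilt α p q z)
      = α * log (p z) + (1 - α) * log (q z) - log (∑ z', p z' ^ α * q z' ^ (1 - α)) := by
  rw [renyiTilt, log_div (mul_pos (rpow_pos_of_pos (hp z) _) (rpow_pos_of_pos (hq z) _)).ne'
      (sum_rpow_mul_rpow_pos hp hq).ne',
    log_mul (rpow_pos_of_pos (hp z) _).ne' (rpow_pos_of_pos (hq z) _).ne',
    log_rpow (hp z), log_rpow (hq z)]

theorem klD_add_klD_eq [Nonempty Z] (hα : α ≠ 1) {w : Z → ℝ} (hw : IsPMF w)
    (hp : ∀ z, 0 < p z) (hq : ∀ z, 0 < q z) :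
    klD w q + α / (1 - α) * klD w p
      = renyiDiv α p q - 1 / (α - 1) * klD w (renyiTilt α p q) := by
  have hα₁ : α - 1 ≠ 0 := sub_ne_zero.2 hα
  have hα₂ : 1 - α ≠ 0 := sub_ne_zero.2 hα.symm
  set S := ∑ z, p z ^ α * q z ^ (1 - α)
  have hterm : ∀ z, w z * log (w z / q z) + α / (1 - α) * (w z * log (w z / p z))
      = 1 / (α - 1) * log S * w z - 1 / (α - 1) * (w z * log (w z / renyiTilt α p q z)) := by
    intro z
    rcases (hw.1 z).eq_or_lt with h | h
    · simp [← h]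
    · rw [log_div h.ne' (hq z).ne', log_div h.ne' (hp z).ne',
        log_div h.ne' (renyiTilt_pos hp hq z).ne', log_renyiTilt hp hq]
      field_simp
      ring
  rw [renyiDiv, klD, klD, klD, mul_sum, ← sum_add_distrib, sum_congr rfl fun z _ => hterm z,
    sum_sub_distrib, ← mul_sum, ← mul_sum, hw.2, mul_one]

theorem klD_add_klD_le_renyiDiv [Nonempty Z] (hα : 1 < α) {w : Z → ℝ} (hw : IsPMF w)
    (hp : ∀ z, 0 < p z) (hq : ∀ z, 0 < q z) :
    klD w q + α / (1 - α) * klD w p ≤ renyiDiv α p q := by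
  rw [klD_add_klD_eq hα.ne' hw hp hq, sub_le_self_iff]
  exact mul_nonneg (one_div_nonneg.2 (sub_nonneg.2 hα.le))
    (klD_nonneg_s5 hw (renyiTilt_pos hp hq) (sum_renyiTilt hp hq).le)

theorem klD_renyiTilt_add_klD [Nonempty Z] (hα : α ≠ 1) (hp : ∀ z, 0 < p z)
    (hq : ∀ z, 0 < q z) :
    klD (renyiTilt α p q) q + α / (1 - α) * klD (renyiTilt α p q) p = renyiDiv α p q := by
  have hself : klD (renyiTilt α p q) (renyiTilt α p q) = 0 :=
    sum_eq_zero fun z _ => by rw [div_self (renyiTilt_pos hp hq z).ne', log_one, mul_zero]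
  rw [klD_add_klD_eq hα (isPMF_renyiTilt hp hq) hp hq, hself, mul_zero, sub_zero]

theorem le_renyiDiv (hα : 1 < α) (hp : ∀ z, 0 < p z) (hq : ∀ z, 0 < q z) (z : Z) :
    α / (α - 1) * log (p z) - log (q z) ≤ renyiDiv α p q := by
  have hα₁ : α - 1 ≠ 0 := (sub_pos.2 hα).ne'
  have hterm : 0 < p z ^ α * q z ^ (1 - α) :=
    mul_pos (rpow_pos_of_pos (hp z) _) (rpow_pos_of_pos (hq z) _)
  have hlog : log (p z ^ α * q z ^ (1 - α)) ≤ log (∑ z', p z' ^ α * q z' ^ (1 - α)) :=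
    log_le_log hterm <| single_le_sum (f := fun z' => p z' ^ α * q z' ^ (1 - α))
      (fun z' _ => (mul_pos (rpow_pos_of_pos (hp z') _) (rpow_pos_of_pos (hq z') _)).le)
      (mem_univ z)
  rw [log_mul (rpow_pos_of_pos (hp z) _).ne' (rpow_pos_of_pos (hq z) _).ne',
    log_rpow (hp z), log_rpow (hq z)] at hlog
  calc α / (α - 1) * log (p z) - log (q z)
      = 1 / (α - 1) * (α * log (p z) + (1 - α) * log (q z)) := by field_simp; ring
    _ ≤ renyiDiv α p q :=
      mul_le_mul_of_nonneg_left hlog (one_div_nonneg.2 (sub_nonneg.2 hα.le))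

theorem continuousOn_renyiDiv [Nonempty Z] (hp : ∀ z, 0 < p z) :
    ContinuousOn (renyiDiv α p) {q | ∀ z, 0 < q z} := by
  refine continuousOn_const.mul (ContinuousOn.log ?_ fun q hq => (sum_rpow_mul_rpow_pos hp hq).ne')
  exact continuousOn_finsetSum _ fun z _ => continuousOn_const.mul <|
    (continuous_apply z).continuousOn.rpow_const fun q hq => Or.inl (hq z).ne'

theorem hasDerivAt_renyiDiv_line [Nonempty Z] (hα : α ≠ 1) (hp : ∀ z, 0 < p z)
    (hq : ∀ z, 0 < q z) (d : Z → ℝ) :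
    HasDerivAt (fun t : ℝ => renyiDiv α p (q + t • d))
      (-∑ z, d z * (renyiTilt α p q z / q z)) 0 := by
  have hα₁ : α - 1 ≠ 0 := sub_ne_zero.2 hα
  have hS := sum_rpow_mul_rpow_pos (α := α) hp hq
  have hterm : ∀ z, HasDerivAt (fun t : ℝ => p z ^ α * (q z + t * d z) ^ (1 - α))
      (p z ^ α * (d z * (1 - α) * q z ^ (1 - α - 1))) 0 := by
    intro z
    have hline : HasDerivAt (fun t : ℝ => q z + t * d z) (d z) 0 := by
      simpa using ((hasDerivAt_id (0 : ℝ)).mul_const (d z)).const_add (q z)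
    simpa using (hline.rpow_const (p := 1 - α) (Or.inl (by simpa using (hq z).ne'))).const_mul
      (p z ^ α)
  have hsum := (HasDerivAt.fun_sum fun z _ => hterm z).log (by simpa using hS.ne')
  have hfun : (fun t : ℝ => renyiDiv α p (q + t • d))
      = fun t => 1 / (α - 1) * log (∑ z, p z ^ α * (q z + t * d z) ^ (1 - α)) := by
    funext t
    simp [renyiDiv]
  rw [hfun]
  refine (hsum.const_mul _).congr_deriv ?_
  simp only [zero_mul, add_zero, sum_div, mul_sum, ← sum_neg_distrib]
  refine sum_congr rfl fun z _ => ?_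
  rw [renyiTilt, rpow_sub_one (hq z).ne']
  field_simp
  ring

end Divergence

section Simplex

open Filter Topology

variable {Y : Type*} [Fintype Y]

theorem isCompact_setOf_le_sum_eq_one {ε : ℝ} (hε : 0 ≤ ε) :
    IsCompact {q : Y → ℝ | (∀ y, ε ≤ q y) ∧ ∑ y, q y = 1} := by
  have hclosed : IsClosed {q : Y → ℝ | (∀ y, ε ≤ q y) ∧ ∑ y, q y = 1} := by
    simp only [Set.ofPred_and, Set.ofPred_forall]
    exact (isClosed_iInter fun y => isClosed_le continuous_const (continuous_apply y)).inter
      (isClosed_eq (continuous_finsetSum _ fun y _ => continuous_apply y) continuous_const)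
  exact (isCompact_stdSimplex ℝ Y).of_isClosed_subset hclosed fun q hq =>
    ⟨fun y => hε.trans (hq.1 y), hq.2⟩

theorem isLocalMin_line_of_isMinOn {f : (Y → ℝ) → ℝ} {ε : ℝ} {q d : Y → ℝ}
    (hmin : IsMinOn f {q | (∀ y, ε ≤ q y) ∧ ∑ y, q y = 1} q) (hq : ∀ y, ε < q y)
    (hq1 : ∑ y, q y = 1) (hd : ∑ y, d y = 0) :
    IsLocalMin (fun t : ℝ => f (q + t • d)) 0 := by
  have hnear : ∀ᶠ t : ℝ in 𝓝 0, ∀ y, ε < q y + t * d y := by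
    refine eventually_all.2 fun y => Tendsto.eventually_const_lt (hq y) ?_
    have hcont : Continuous fun t : ℝ => q y + t * d y := by fun_prop
    simpa using hcont.tendsto 0
  filter_upwards [hnear] with t ht
  simp only [zero_smul, add_zero]
  refine hmin ⟨fun y => (ht y).le, ?_⟩
  simp [sum_add_distrib, ← mul_sum, hq1, hd]

end Simplex

section Augustin

variable {X Y : Type*} [Fintype X] [Fintype Y]

noncomputable def augustinObj (α : ℝ) (pX : X → ℝ) (pYX : X → Y → ℝ) (q : Y → ℝ) : ℝ :=
  ∑ x, pX x * renyiDiv α (pYX x) q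

/-- The function `F̃_α^C(q̃_{Y|X}, r_{X|Y})` of the paper. -/
noncomputable def acFC (α : ℝ) (pX : X → ℝ) (pYX qt : X → Y → ℝ) (r : Y → X → ℝ) : ℝ :=
  α / (1 - α) * klD (fun z : X × Y => pX z.1 * qt z.1 z.2) (fun z : X × Y => pX z.1 * pYX z.1 z.2)
    + ∑ x, ∑ y, pX x * qt x y * log (r y x / pX x)

theorem klD_prod (pX : X → ℝ) (qt pYX : X → Y → ℝ) :
    klD (fun z : X × Y => pX z.1 * qt z.1 z.2) (fun z : X × Y => pX z.1 * pYX z.1 z.2)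
      = ∑ x, pX x * klD (qt x) (pYX x) := by
  rw [klD, Fintype.sum_prod_type]
  refine sum_congr rfl fun x _ => ?_
  rw [klD, mul_sum]
  refine sum_congr rfl fun y _ => ?_
  rcases eq_or_ne (pX x) 0 with h | h
  · simp [h]
  · rw [mul_div_mul_left _ _ h, mul_assoc]

variable {α : ℝ} {pX : X → ℝ} {pYX : X → Y → ℝ}

theorem sum_mul_log_div_eq_sub_klD (hpX : ∀ x, 0 ≤ pX x) {qt : X → Y → ℝ}
    (hqt : ∀ x y, 0 ≤ qt x y) {s : Y → ℝ} (hs : ∀ y, 0 < s y) {r : Y → X → ℝ}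
    (hr : ∀ y x, 0 < r y x) :
    ∑ x, ∑ y, pX x * qt x y * log (r y x / pX x)
      = ∑ x, pX x * klD (qt x) s
        - klD (fun z : X × Y => pX z.1 * qt z.1 z.2) (fun z => r z.2 z.1 * s z.2) := by
  have hterm : ∀ x y, pX x * qt x y * log (r y x / pX x)
      = pX x * (qt x y * log (qt x y / s y))
        - pX x * qt x y * log (pX x * qt x y / (r y x * s y)) := by
    intro x y
    rcases (hpX x).eq_or_lt with hx | hx
    · simp [← hx]
    rcases (hqt x y).eq_or_lt with hxy | hxy
    · simp [← hxy]
    rw [log_div (hr y x).ne' hx.ne', log_div hxy.ne' (hs y).ne',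
      log_div (mul_pos hx hxy).ne' (mul_pos (hr y x) (hs y)).ne', log_mul hx.ne' hxy.ne',
      log_mul (hr y x).ne' (hs y).ne']
    ring
  rw [klD, Fintype.sum_prod_type, ← sum_sub_distrib]
  refine sum_congr rfl fun x _ => ?_
  rw [klD, mul_sum, ← sum_sub_distrib]
  exact sum_congr rfl fun y _ => hterm x y

theorem acFC_le_augustinObj [Nonempty Y] (hα : 1 < α) (hpX : IsPMF pX)
    (hpYX : ∀ x y, 0 < pYX x y) {s : Y → ℝ} (hs : ∀ y, 0 < s y) (hs1 : ∑ y, s y ≤ 1)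
    {qt : X → Y → ℝ} (hqt : ∀ x, IsPMF (qt x)) {r : Y → X → ℝ} (hr : ∀ y x, 0 < r y x)
    (hr1 : ∀ y, ∑ x, r y x ≤ 1) :
    acFC α pX pYX qt r ≤ augustinObj α pX pYX s := by
  set joint : X × Y → ℝ := fun z => pX z.1 * qt z.1 z.2
  have hjoint : IsPMF joint := by
    refine ⟨fun z => mul_nonneg (hpX.1 _) ((hqt _).1 _), ?_⟩
    simp only [joint, Fintype.sum_prod_type, ← mul_sum, (hqt _).2, mul_one, hpX.2]
  have hgibbs : 0 ≤ klD joint fun z => r z.2 z.1 * s z.2 := by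
    refine klD_nonneg_s5 hjoint (fun z => mul_pos (hr _ _) (hs _)) ?_
    rw [Fintype.sum_prod_type_right]
    calc ∑ y, ∑ x, r y x * s y = ∑ y, (∑ x, r y x) * s y := by simp only [sum_mul]
      _ ≤ ∑ y, 1 * s y := sum_le_sum fun y _ => mul_le_mul_of_nonneg_right (hr1 y) (hs y).le
      _ ≤ 1 := by simpa using hs1
  calc acFC α pX pYX qt r
      = ∑ x, pX x * (klD (qt x) s + α / (1 - α) * klD (qt x) (pYX x))
          - klD joint (fun z => r z.2 z.1 * s z.2) := by
        rw [acFC, klD_prod, sum_mul_log_div_eq_sub_klD hpX.1 (fun x => (hqt x).1) hs hr, mul_sum]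
        simp only [mul_add, sum_add_distrib, mul_left_comm (pX _)]
        ring
    _ ≤ augustinObj α pX pYX s :=
        (sub_le_self _ hgibbs).trans <| sum_le_sum fun x _ =>
          mul_le_mul_of_nonneg_left (klD_add_klD_le_renyiDiv hα (hqt x) (hpYX x) hs) (hpX.1 x)

theorem acFC_renyiTilt [Nonempty Y] (hα : α ≠ 1) (hpX : ∀ x, pX x ≠ 0)
    (hpYX : ∀ x y, 0 < pYX x y) {q : Y → ℝ} (hq : ∀ y, 0 < q y) :
    acFC α pX pYX (fun x => renyiTilt α (pYX x) q)
        (fun y x => pX x * renyiTilt α (pYX x) q y / q y)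
      = augustinObj α pX pYX q := by
  have hsecond : ∀ x, ∑ y, pX x * renyiTilt α (pYX x) q y
        * log (pX x * renyiTilt α (pYX x) q y / q y / pX x)
      = pX x * klD (renyiTilt α (pYX x) q) q := by
    intro x
    rw [klD, mul_sum]
    refine sum_congr rfl fun y _ => ?_
    rw [mul_div_assoc, mul_div_cancel_left₀ _ (hpX x), mul_assoc]
  have hprod := klD_prod pX (fun x => renyiTilt α (pYX x) q) pYX
  rw [acFC, hprod, sum_congr rfl fun x _ => hsecond x, augustinObj, mul_sum,
    ← sum_add_distrib]
  refine sum_congr rfl fun x _ => ?_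
  rw [← klD_renyiTilt_add_klD hα (hpYX x) hq]
  ring

theorem exists_acFC_eq_augustinObj [Nonempty Y] (hα : α ≠ 1) (hpX : ∀ x, 0 < pX x)
    (hpYX : ∀ x y, 0 < pYX x y) {q : Y → ℝ} (hq : ∀ y, 0 < q y)
    (hfix : ∀ y, ∑ x, pX x * renyiTilt α (pYX x) q y = q y) :
    ∃ qt : X → Y → ℝ, (∀ x, IsPMF (qt x)) ∧ ∃ r : Y → X → ℝ, (∀ y, IsPMF (r y)) ∧
      (∀ y x, 0 < r y x) ∧ acFC α pX pYX qt r = augustinObj α pX pYX q := by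
  have hr : ∀ y x, 0 < pX x * renyiTilt α (pYX x) q y / q y := fun y x =>
    div_pos (mul_pos (hpX x) (renyiTilt_pos (hpYX x) hq y)) (hq y)
  refine ⟨_, fun x => isPMF_renyiTilt (hpYX x) hq, _, fun y => ⟨fun x => (hr y x).le, ?_⟩, hr,
    acFC_renyiTilt hα (fun x => (hpX x).ne') hpYX hq⟩
  rw [← sum_div, hfix y, div_self (hq y).ne']

theorem continuousOn_augustinObj [Nonempty Y] (hpYX : ∀ x y, 0 < pYX x y) :
    ContinuousOn (augustinObj α pX pYX) {q | ∀ y, 0 < q y} :=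
  continuousOn_finsetSum _ fun x _ => continuousOn_const.mul (continuousOn_renyiDiv (hpYX x))

theorem le_augustinObj (hα : 1 < α) (hpX : IsPMF pX) (hpYX : ∀ x y, 0 < pYX x y) {m : ℝ}
    (hm : ∀ x y, m ≤ log (pYX x y)) {q : Y → ℝ} (hq : ∀ y, 0 < q y) (y : Y) :
    α / (α - 1) * m - log (q y) ≤ augustinObj α pX pYX q := by
  have hcoef : 0 ≤ α / (α - 1) := div_nonneg (by linarith) (by linarith)
  calc α / (α - 1) * m - log (q y) = ∑ x, pX x * (α / (α - 1) * m - log (q y)) := by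
        rw [← sum_mul, hpX.2, one_mul]
    _ ≤ augustinObj α pX pYX q := sum_le_sum fun x _ => mul_le_mul_of_nonneg_left
        (by grw [hm x y]; exact le_renyiDiv hα (hpYX x) hq y) (hpX.1 x)

theorem hasDerivAt_augustinObj_line [Nonempty Y] (hα : α ≠ 1) (hpYX : ∀ x y, 0 < pYX x y)
    {q : Y → ℝ} (hq : ∀ y, 0 < q y) (d : Y → ℝ) :
    HasDerivAt (fun t : ℝ => augustinObj α pX pYX (q + t • d))
      (-∑ y, d y * ((∑ x, pX x * renyiTilt α (pYX x) q y) / q y)) 0 := by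
  refine (HasDerivAt.fun_sum fun x _ =>
    (hasDerivAt_renyiDiv_line hα (hpYX x) hq d).const_mul (pX x)).congr_deriv ?_
  simp only [mul_neg, sum_neg_distrib, mul_sum, sum_div]
  rw [sum_comm]
  refine congrArg Neg.neg (sum_congr rfl fun y _ => sum_congr rfl fun x _ => ?_)
  ring

/-- Pushing the constraint `ε ≤ q` slightly inside the simplex makes the minimizer interior,
because `augustinObj` blows up like `-log (q y)` as `q y → 0`. -/
theorem exists_isMinOn_augustinObj [Nonempty Y] (hα : 1 < α) (hpX : IsPMF pX)
    (hpYX : ∀ x y, 0 < pYX x y) :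
    ∃ ε > 0, ∃ q : Y → ℝ, (∀ y, ε < q y) ∧ ∑ y, q y = 1 ∧
      IsMinOn (augustinObj α pX pYX) {q | (∀ y, ε ≤ q y) ∧ ∑ y, q y = 1} q := by
  obtain ⟨m, hm⟩ := (Set.finite_range fun z : X × Y => log (pYX z.1 z.2)).bddBelow
  have hcard : (0 : ℝ) < Fintype.card Y := by exact_mod_cast Fintype.card_pos
  set u : Y → ℝ := fun _ => (Fintype.card Y : ℝ)⁻¹
  set M := augustinObj α pX pYX u
  set ε := min (Fintype.card Y : ℝ)⁻¹ (exp (α / (α - 1) * m - M - 1))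
  have hε : 0 < ε := lt_min (inv_pos.2 hcard) (exp_pos _)
  have hu : u ∈ {q : Y → ℝ | (∀ y, ε ≤ q y) ∧ ∑ y, q y = 1} :=
    ⟨fun _ => min_le_left _ _, by simp [u, hcard.ne']⟩
  have hcont : ContinuousOn (augustinObj α pX pYX) {q | (∀ y, ε ≤ q y) ∧ ∑ y, q y = 1} :=
    (continuousOn_augustinObj hpYX).mono fun q hq y => hε.trans_le (hq.1 y)
  obtain ⟨q, hqK, hmin⟩ := (isCompact_setOf_le_sum_eq_one hε.le).exists_isMinOn ⟨u, hu⟩ hcont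
  refine ⟨ε, hε, q, fun y => ?_, hqK.2, hmin⟩
  by_contra! hqy
  have hq : ∀ y, 0 < q y := fun y => hε.trans_le (hqK.1 y)
  have hlow := le_augustinObj hα hpX hpYX (fun x y => hm ⟨(x, y), rfl⟩) hq y
  have hlog : log (q y) ≤ α / (α - 1) * m - M - 1 :=
    (log_le_log (hq y) (hqy.trans (min_le_right _ _))).trans_eq (log_exp _)
  have hqu : augustinObj α pX pYX q ≤ M := hmin hu
  linarith

theorem exists_augustinMean [Nonempty Y] (hα : 1 < α) (hpX : IsPMF pX)
    (hpYX : ∀ x y, 0 < pYX x y) :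
    ∃ q : Y → ℝ, (∀ y, 0 < q y) ∧ ∑ y, q y = 1 ∧
      ∀ y, ∑ x, pX x * renyiTilt α (pYX x) q y = q y := by
  classical
  obtain ⟨ε, hε, q, hqε, hq1, hmin⟩ := exists_isMinOn_augustinObj hα hpX hpYX
  have hq : ∀ y, 0 < q y := fun y => hε.trans (hqε y)
  set μ : Y → ℝ := fun y => ∑ x, pX x * renyiTilt α (pYX x) q y
  have hμ1 : ∑ y, μ y = 1 := by
    simp only [μ]
    rw [sum_comm]
    simp [← mul_sum, sum_renyiTilt (hpYX _) hq, hpX.2]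
  -- the first-order condition of the minimizer along `e_y₁ - e_y₂`
  have hratio : ∀ y₁ y₂, μ y₁ / q y₁ = μ y₂ / q y₂ := by
    intro y₁ y₂
    have hd : ∑ y, (Pi.single y₁ 1 - Pi.single y₂ 1 : Y → ℝ) y = 0 := by simp
    have h0 := (isLocalMin_line_of_isMinOn hmin hqε hq1 hd).hasDerivAt_eq_zero
      (hasDerivAt_augustinObj_line hα.ne' hpYX hq _)
    simp only [Pi.sub_apply, Pi.single_apply, sub_mul, ite_mul, one_mul, zero_mul,
      sum_sub_distrib, sum_ite_eq', mem_univ, ↓reduceIte, neg_sub] at h0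
    linarith
  obtain ⟨y₀⟩ := ‹Nonempty Y›
  have hμ : ∀ y, μ y = μ y₀ / q y₀ * q y := fun y => by
    rw [← hratio y y₀, div_mul_cancel₀ _ (hq y).ne']
  rw [sum_congr rfl fun y _ => hμ y, ← mul_sum, hq1, mul_one] at hμ1
  exact ⟨q, hq, hq1, fun y => (hμ y).trans (by rw [hμ1, one_mul])⟩

theorem sum_mul_renyiDE_of_pos {qY : Y → ℝ} (hqY : ∀ y, 0 < qY y) :
    ∑ x, ((pX x : ℝ) : EReal) * renyiDE α (fun y => pYX x y) qY
      = (augustinObj α pX pYX qY : EReal) := by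
  have hfin : ∀ x, renyiDE α (fun y => pYX x y) qY = renyiDiv α (pYX x) qY := fun x =>
    if_neg fun ⟨_, y, _, hy⟩ => (hqY y).ne' hy
  simp only [hfin, augustinObj, ← EReal.coe_mul]
  exact (map_sum (⟨⟨(↑), EReal.coe_zero⟩, EReal.coe_add⟩ : ℝ →+ EReal) _ _).symm

theorem sum_mul_renyiDE_eq_top [Nonempty X] (hα : 1 < α) (hpX : ∀ x, 0 < pX x)
    (hpYX : ∀ x y, pYX x y ≠ 0) {qY : Y → ℝ} {y₀ : Y} (hy₀ : qY y₀ = 0) :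
    ∑ x, ((pX x : ℝ) : EReal) * renyiDE α (fun y => pYX x y) qY = ⊤ := by
  have htop : ∀ x, ((pX x : ℝ) : EReal) * renyiDE α (fun y => pYX x y) qY = ⊤ := fun x => by
    rw [renyiDE, if_pos ⟨hα, y₀, hpYX x y₀, hy₀⟩]
    exact EReal.coe_mul_top_of_pos (hpX x)
  obtain ⟨x₀⟩ := ‹Nonempty X›
  refine top_le_iff.1 ((htop x₀).ge.trans (single_le_sum
    (f := fun x => ((pX x : ℝ) : EReal) * renyiDE α (fun y => pYX x y) qY)
    (fun x _ => (htop x).symm ▸ le_top) (mem_univ x₀)))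

theorem acMI_eq_augustinObj [Nonempty X] (hα : 1 < α) (hpX : ∀ x, 0 < pX x)
    (hpYX : ∀ x y, 0 < pYX x y) {q : Y → ℝ} (hq : ∀ y, 0 < q y) (hq1 : ∑ y, q y = 1)
    (hmin : ∀ s : Y → ℝ, (∀ y, 0 < s y) → ∑ y, s y = 1 →
      augustinObj α pX pYX q ≤ augustinObj α pX pYX s) :
    acMI α pX pYX = augustinObj α pX pYX q := by
  refine le_antisymm (sInf_le ⟨q, ⟨fun y => (hq y).le, hq1⟩, (sum_mul_renyiDE_of_pos hq).symm⟩)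
    (le_sInf ?_)
  rintro v ⟨s, hs, rfl⟩
  by_cases hpos : ∀ y, 0 < s y
  · rw [sum_mul_renyiDE_of_pos hpos]
    exact EReal.coe_le_coe_iff.2 (hmin s hpos hs.2)
  · obtain ⟨y₀, hy₀⟩ := not_forall.1 hpos
    rw [sum_mul_renyiDE_eq_top hα hpX (fun x y => (hpYX x y).ne')
      ((hs.1 y₀).eq_of_not_lt hy₀).symm]
    exact le_top

end Augustin

theorem acMI_eq_sup_FC_general {X Y : Type*} [Fintype X] [Fintype Y] [Nonempty X] [Nonempty Y]
    (α : ℝ) (hα : 1 < α)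
    (pX : X → ℝ) (hpX : IsPMF pX) (hpXpos : ∀ x, 0 < pX x)
    (pYX : X → Y → ℝ) (hpYXpos : ∀ x y, 0 < pYX x y) :
    IsGreatest
      {v : EReal | ∃ qt : X → Y → ℝ, (∀ x, IsPMF (qt x)) ∧
        ∃ r : Y → X → ℝ, (∀ y, IsPMF (r y)) ∧ (∀ y x, 0 < r y x) ∧
        v = (((α / (1 - α)) *
                klD (fun z : X × Y => pX z.1 * qt z.1 z.2)
                    (fun z : X × Y => pX z.1 * pYX z.1 z.2)
              + ∑ x, ∑ y, pX x * qt x y * Real.log (r y x / pX x) : ℝ) : EReal)}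
      (acMI α pX pYX) := by
  obtain ⟨q, hq, hq1, hfix⟩ := exists_augustinMean hα hpX hpYXpos
  obtain ⟨W, hW, R, hR, hRpos, hWR⟩ := exists_acFC_eq_augustinObj hα.ne' hpXpos hpYXpos hq hfix
  have hle : ∀ {s : Y → ℝ}, (∀ y, 0 < s y) → ∑ y, s y = 1 → ∀ {qt : X → Y → ℝ},
      (∀ x, IsPMF (qt x)) → ∀ {r : Y → X → ℝ}, (∀ y, IsPMF (r y)) → (∀ y x, 0 < r y x) →
      acFC α pX pYX qt r ≤ augustinObj α pX pYX s := fun hs hs1 _ hqt _ hr hrpos =>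
    acFC_le_augustinObj hα hpX hpYXpos hs hs1.le hqt hrpos fun y => (hr y).2.le
  rw [acMI_eq_augustinObj hα hpXpos hpYXpos hq hq1 fun s hs hs1 => hWR ▸ hle hs hs1 hW hR hRpos]
  refine ⟨⟨W, hW, R, hR, hRpos, by rw [← hWR]; rfl⟩, ?_⟩
  rintro v ⟨qt, hqt, r, hr, hrpos, rfl⟩
  exact EReal.coe_le_coe_iff.2 (hle hq hq1 hqt hr hrpos)

/-- For `α > 1`, the Augustin--Csiszár mutual information of order `α` is the supremum,
over channels `q̃_{Y|X}` and strictly positive reverse channels `r_{X|Y}`, of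
`F̃_α^C(q̃_{Y|X}, r) = (α/(1−α)) D(p_X q̃_{Y|X} ‖ p_X p_{Y|X})
  + Σ_{x,y} p_X(x) q̃_{Y|X}(y|x) log(r(x|y)/p_X(x))`, and the supremum is attained. -/
theorem acMI_eq_sup_FC {X Y : Type*} [Fintype X] [Fintype Y] [Nonempty X] [Nonempty Y]
    (α : ℝ) (hα : 1 < α)
    (pX : X → ℝ) (hpX : IsPMF pX) (hpXpos : ∀ x, 0 < pX x)
    (pYX : X → Y → ℝ) (hpYX : ∀ x, IsPMF (pYX x)) (hpYXpos : ∀ x y, 0 < pYX x y) :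
    IsGreatest
      {v : EReal | ∃ qt : X → Y → ℝ, (∀ x, IsPMF (qt x)) ∧
        ∃ r : Y → X → ℝ, (∀ y, IsPMF (r y)) ∧ (∀ y x, 0 < r y x) ∧
        v = (((α / (1 - α)) *
                klD (fun z : X × Y => pX z.1 * qt z.1 z.2)
                    (fun z : X × Y => pX z.1 * pYX z.1 z.2)
              + ∑ x, ∑ y, pX x * qt x y * Real.log (r y x / pX x) : ℝ) : EReal)}
      (acMI α pX pYX) :=
  acMI_eq_sup_FC_general α hα pX hpX hpXpos pYX hpYXpos
end
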